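/- arXiv:1802.01506 — 6 statements merged into one kernel-verified Lean document; each statement's English description precedes it below -/
import Mathlib

section
/- For every positive integer m, the number of pairs (x,y) ∈ ℤ² with x² + y² = m equals 4 times the sum of (-1)^{(d-1)/2} over all odd divisors d of m. -/
/-!
Let `r m` be the number of Gaussian integers of norm `m`. For a prime `p` it satisfies
`r (p m) = (1 + χ₄ p) r m - χ₄ p r (m / p)`, the last term present only when `p ∣ m`:
every `z` with `p ∣ N z` is divisible by `1 + i` if `p = 2` and by the Gaussian prime `p` if
`p ≡ 3 mod 4`; if `p ≡ 1 mod 4` then `p = π π̄` and `z` is divisible by `π` or by `π̄`, by both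
exactly when `p ∣ z`. Hence `r (p ^ a n) = (∑ j ≤ a, χ₄ p ^ j) r n` for `p ∤ n`, and the
multiplicative function `m ↦ ∑ d ∣ m, χ₄ d` obeys the same rule.
-/

open Finset ZMod

namespace DirichletCharacter

variable {R : Type*} [CommSemiring R] {N : ℕ} (χ : DirichletCharacter R N)

theorem sum_divisors_mul {m n : ℕ} (hmn : m.Coprime n) :
    ∑ d ∈ (m * n).divisors, χ d = (∑ d ∈ m.divisors, χ d) * ∑ d ∈ n.divisors, χ d := by
  have h (k : ℕ) : ∑ d ∈ k.divisors, χ d =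
      (ArithmeticFunction.zeta * toArithmeticFunction (χ ·) : ArithmeticFunction R) k := by
    rw [ArithmeticFunction.coe_zeta_mul_apply]
    refine sum_congr rfl fun d hd => ?_
    simp [toArithmeticFunction, Nat.ne_of_gt (Nat.pos_of_mem_divisors hd)]
  rw [h, h, h, (ArithmeticFunction.isMultiplicative_zeta.natCast.mul
    χ.isMultiplicative_toArithmeticFunction).map_mul_of_coprime hmn]

theorem sum_divisors_prime_pow {p : ℕ} (hp : p.Prime) (a : ℕ) :
    ∑ d ∈ (p ^ a).divisors, χ d = ∑ j ∈ range (a + 1), χ p ^ j := by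
  simp [Nat.sum_divisors_prime_pow hp, map_pow]

end DirichletCharacter

theorem sum_χ₄_eq_sum_odd_neg_one_pow (s : Finset ℕ) :
    ∑ d ∈ s, χ₄ d = ∑ d ∈ s with Odd d, (-1 : ℤ) ^ ((d - 1) / 2) := by
  rw [sum_filter]
  refine sum_congr rfl fun d _ => ?_
  split_ifs with hd
  · have hd2 := Nat.odd_iff.1 hd
    rw [χ₄_eq_neg_one_pow hd2]
    congr 1
    omega
  · rw [χ₄_nat_eq_if_mod_four, if_pos (Nat.even_iff.1 (Nat.not_odd_iff_even.1 hd))]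

namespace GaussianInt

def normSet (n : ℕ) : Set GaussianInt := {z | z.norm = n}

theorem mem_normSet {n : ℕ} {z : GaussianInt} : z ∈ normSet n ↔ z.norm = n := Iff.rfl

theorem reIm_injective : Function.Injective fun z : GaussianInt => (z.re, z.im) :=
  fun _ _ h => Zsqrtd.ext (congrArg Prod.fst h) (congrArg Prod.snd h)

theorem image_reIm_normSet (n : ℕ) :
    (fun z : GaussianInt => (z.re, z.im)) '' normSet n = {q : ℤ × ℤ | q.1 ^ 2 + q.2 ^ 2 = n} := by
  ext ⟨x, y⟩
  constructor
  · rintro ⟨z, hz, ⟨⟩⟩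
    rw [mem_normSet, Zsqrtd.norm_def] at hz
    simp only [Set.mem_ofPred_eq]
    linear_combination hz
  · intro h
    refine ⟨⟨x, y⟩, ?_, rfl⟩
    rw [mem_normSet, Zsqrtd.norm_def]
    simp only [Set.mem_ofPred_eq] at h
    linear_combination h

theorem finite_normSet (n : ℕ) : (normSet n).Finite := by
  refine Set.Finite.of_finite_image ?_ reIm_injective.injOn
  rw [image_reIm_normSet]
  refine ((Set.finite_Icc (-(n : ℤ)) n).prod (Set.finite_Icc (-(n : ℤ)) n)).subset ?_
  rintro ⟨x, y⟩ h
  simp only [Set.mem_ofPred_eq] at h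
  simp only [Set.mem_prod, Set.mem_Icc]
  refine ⟨⟨?_, ?_⟩, ⟨?_, ?_⟩⟩ <;> nlinarith [sq_nonneg (x + 1), sq_nonneg (x - 1),
    sq_nonneg (y + 1), sq_nonneg (y - 1)]

theorem normSet_one :
    normSet 1 = ↑({⟨1, 0⟩, ⟨-1, 0⟩, ⟨0, 1⟩, ⟨0, -1⟩} : Finset GaussianInt) := by
  ext ⟨x, y⟩
  rw [mem_normSet, Zsqrtd.norm_def]
  simp only [coe_insert, coe_singleton, Set.mem_insert_iff, Set.mem_singleton_iff,
    Zsqrtd.mk.injEq]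
  push_cast
  constructor
  · intro h
    have hx : x * x ≤ 1 := by nlinarith [mul_self_nonneg y]
    have hy : y * y ≤ 1 := by nlinarith [mul_self_nonneg x]
    obtain ⟨hx₁, hx₂⟩ : -1 ≤ x ∧ x ≤ 1 := ⟨by nlinarith, by nlinarith⟩
    obtain ⟨hy₁, hy₂⟩ : -1 ≤ y ∧ y ≤ 1 := ⟨by nlinarith, by nlinarith⟩
    interval_cases x <;> interval_cases y <;> simp_all
  · rintro (⟨rfl, rfl⟩ | ⟨rfl, rfl⟩ | ⟨rfl, rfl⟩ | ⟨rfl, rfl⟩) <;> norm_num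

theorem ncard_normSet_one : (normSet 1).ncard = 4 := by
  rw [normSet_one, Set.ncard_coe_finset]
  decide

theorem prime_of_prime_norm {z : GaussianInt} (h : Prime z.norm) : Prime z := by
  refine Irreducible.prime ⟨fun hz => h.not_isUnit ?_, fun a b hab => ?_⟩
  · exact Int.isUnit_iff_natAbs_eq.2 (Zsqrtd.norm_eq_one_iff.2 hz)
  · rw [hab, Zsqrtd.norm_mul] at h
    refine (h.irreducible.isUnit_or_isUnit rfl).imp ?_ ?_ <;>
      exact fun hu => Zsqrtd.norm_eq_one_iff.1 (Int.isUnit_iff_natAbs_eq.1 hu)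

theorem dvd_or_star_dvd_of_dvd_norm {ρ z : GaussianInt} (hρ : Prime ρ)
    (h : ρ ∣ (z.norm : GaussianInt)) : ρ ∣ z ∨ star ρ ∣ z := by
  rw [Zsqrtd.norm_eq_mul_conj] at h
  refine (hρ.dvd_or_dvd h).imp_right fun h' => ?_
  simpa only [starRingEnd_apply, star_star] using map_dvd (starRingEnd GaussianInt) h'

theorem mul_mem_normSet_iff {ρ w : GaussianInt} {c k : ℕ} (hρ : ρ.norm = c) (hc : c ≠ 0) :
    ρ * w ∈ normSet (c * k) ↔ w ∈ normSet k := by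
  rw [mem_normSet, mem_normSet, Zsqrtd.norm_mul, hρ, Nat.cast_mul]
  exact mul_right_inj' (Nat.cast_ne_zero.2 hc)

theorem ncard_normSet_sep_dvd {ρ : GaussianInt} {c : ℕ} (hρ : ρ.norm = c) (hc : c ≠ 0) (n : ℕ) :
    {z ∈ normSet n | ρ ∣ z}.ncard = if c ∣ n then (normSet (n / c)).ncard else 0 := by
  split_ifs with hcn
  · obtain ⟨k, rfl⟩ := hcn
    have hρ0 : ρ ≠ 0 := by rintro rfl; simp [eq_comm, hc] at hρ
    have hset : {z ∈ normSet (c * k) | ρ ∣ z} = (ρ * ·) '' normSet k := by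
      ext z
      constructor
      · rintro ⟨hz, w, rfl⟩
        exact ⟨w, (mul_mem_normSet_iff hρ hc).1 hz, rfl⟩
      · rintro ⟨w, hw, rfl⟩
        exact ⟨(mul_mem_normSet_iff hρ hc).2 hw, dvd_mul_right ρ w⟩
    rw [Nat.mul_div_cancel_left k (Nat.pos_of_ne_zero hc), hset,
      Set.ncard_image_of_injective _ (mul_right_injective₀ hρ0)]
  · rw [Set.ncard_eq_zero (finite_normSet n |>.subset (Set.sep_subset _ _))]
    refine Set.eq_empty_of_forall_notMem fun z ⟨hz, w, hw⟩ => hcn ?_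
    rw [mem_normSet, hw, Zsqrtd.norm_mul, hρ] at hz
    exact Int.natCast_dvd_natCast.1 ⟨w.norm, hz.symm⟩

theorem sep_dvd_normSet_eq_self {ρ : GaussianInt} {n : ℕ} (hρ : Prime ρ) (hstar : ρ ∣ star ρ)
    (hn : ρ ∣ (n : GaussianInt)) : {z ∈ normSet n | ρ ∣ z} = normSet n := by
  refine Set.sep_eq_self_iff_mem_true.2 fun z hz => ?_
  have hnorm : ρ ∣ (z.norm : GaussianInt) := by rw [mem_normSet.1 hz]; exact_mod_cast hn
  exact (dvd_or_star_dvd_of_dvd_norm hρ hnorm).elim id hstar.trans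

theorem ncard_normSet_mul_sep_natCast_dvd {p : ℕ} (hp : 0 < p) (m : ℕ) :
    {z ∈ normSet (p * m) | (p : GaussianInt) ∣ z}.ncard =
      if p ∣ m then (normSet (m / p)).ncard else 0 := by
  rw [ncard_normSet_sep_dvd (c := p * p) (by simp [Zsqrtd.norm_natCast]) (by positivity)]
  simp only [Nat.mul_dvd_mul_iff_left hp, Nat.mul_div_mul_left m p hp]

theorem ncard_normSet_two_mul (m : ℕ) : (normSet (2 * m)).ncard = (normSet m).ncard := by
  have hnorm : (⟨1, 1⟩ : GaussianInt).norm = (2 : ℕ) := by decide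
  have hprime : Prime (⟨1, 1⟩ : GaussianInt) :=
    prime_of_prime_norm (by rw [hnorm]; exact Int.prime_two)
  have hdvd : (⟨1, 1⟩ : GaussianInt) ∣ ((2 * m : ℕ) : GaussianInt) :=
    (show (⟨1, 1⟩ : GaussianInt) ∣ 2 from ⟨⟨1, -1⟩, by decide⟩).trans
      (by push_cast; exact dvd_mul_right _ _)
  rw [← sep_dvd_normSet_eq_self hprime ⟨⟨0, -1⟩, by decide⟩ hdvd,
    ncard_normSet_sep_dvd hnorm two_ne_zero, if_pos (dvd_mul_right 2 m),
    Nat.mul_div_cancel_left m two_pos]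

theorem ncard_normSet_mul_of_mod_four_eq_three {p : ℕ} (hp : p.Prime) (hp3 : p % 4 = 3)
    (m : ℕ) : (normSet (p * m)).ncard = if p ∣ m then (normSet (m / p)).ncard else 0 := by
  have : Fact p.Prime := ⟨hp⟩
  rw [← ncard_normSet_mul_sep_natCast_dvd hp.pos,
    sep_dvd_normSet_eq_self (prime_of_nat_prime_of_mod_four_eq_three p hp3) (by simp)
      (by push_cast; exact dvd_mul_right _ _)]

theorem natCast_dvd_of_dvd_of_star_dvd {π z : GaussianInt} {p : ℕ} (hp : p.Prime) (hp2 : p ≠ 2)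
    (hπ : π.norm = p) (h : π ∣ z) (h' : star π ∣ z) : (p : GaussianInt) ∣ z := by
  have hpZ : Prime (p : ℤ) := Nat.prime_iff_prime_int.mp hp
  have norm_dvd : ∀ w : GaussianInt, π ∣ w → (p : ℤ) ∣ w.norm := fun w ⟨c, hc⟩ =>
    ⟨c.norm, by rw [hc, Zsqrtd.norm_mul, hπ]⟩
  have cancel_two : ∀ a : ℤ, (p : ℤ) ∣ (2 * a) ^ 2 → (p : ℤ) ∣ a := fun a ha =>
    ((hpZ.dvd_or_dvd (hpZ.dvd_of_dvd_pow ha)).resolve_left fun h2 =>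
      hp2 ((Nat.prime_dvd_prime_iff_eq hp Nat.prime_two).1 (by exact_mod_cast h2)))
  -- `π` divides `z + z̄ = 2 re z` and `z - z̄ = 2i im z`, so `p` divides `4 re²` and `4 im²`.
  have hz : π ∣ star z := by
    simpa only [starRingEnd_apply, star_star] using map_dvd (starRingEnd GaussianInt) h'
  have hre : (p : ℤ) ∣ (2 * z.re) ^ 2 := by
    convert norm_dvd _ (dvd_add h hz) using 1
    rw [Zsqrtd.norm_def, Zsqrtd.re_add, Zsqrtd.im_add, Zsqrtd.re_star, Zsqrtd.im_star]
    ring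
  have him : (p : ℤ) ∣ (2 * z.im) ^ 2 := by
    convert norm_dvd _ (dvd_sub h hz) using 1
    rw [Zsqrtd.norm_def, Zsqrtd.re_sub, Zsqrtd.im_sub, Zsqrtd.re_star, Zsqrtd.im_star]
    ring
  rw [← Int.cast_natCast, Zsqrtd.intCast_dvd]
  exact ⟨cancel_two _ hre, cancel_two _ him⟩

theorem ncard_normSet_mul_of_mod_four_eq_one {p : ℕ} (hp : p.Prime) (hp1 : p % 4 = 1) (m : ℕ) :
    (normSet (p * m)).ncard + (if p ∣ m then (normSet (m / p)).ncard else 0) =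
      2 * (normSet m).ncard := by
  have : Fact p.Prime := ⟨hp⟩
  obtain ⟨x, y, hxy⟩ := Nat.Prime.sq_add_sq (p := p) (by omega)
  set π : GaussianInt := ⟨x, y⟩
  have hπ : π.norm = p := by rw [Zsqrtd.norm_def]; push_cast [← hxy]; ring
  have hπ' : (star π).norm = p := by rw [Zsqrtd.norm_conj, hπ]
  have hπp : π * star π = p := by rw [← Zsqrtd.norm_eq_mul_conj, hπ, Int.cast_natCast]
  have hcount : ∀ ρ : GaussianInt, ρ.norm = p →
      {z ∈ normSet (p * m) | ρ ∣ z}.ncard = (normSet m).ncard := fun ρ hρ => by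
    rw [ncard_normSet_sep_dvd hρ hp.ne_zero, if_pos (dvd_mul_right p m),
      Nat.mul_div_cancel_left m hp.pos]
  have hunion : {z ∈ normSet (p * m) | π ∣ z} ∪ {z ∈ normSet (p * m) | star π ∣ z} =
      normSet (p * m) := by
    ext z
    refine ⟨fun hz => hz.elim (·.1) (·.1), fun hz => ?_⟩
    have hπprime : Prime π := prime_of_prime_norm (hπ ▸ Nat.prime_iff_prime_int.mp hp)
    have hdvd : π ∣ (z.norm : GaussianInt) := by
      rw [mem_normSet.1 hz]
      exact ⟨star π * m, by push_cast; rw [← mul_assoc, hπp]⟩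
    exact (dvd_or_star_dvd_of_dvd_norm hπprime hdvd).imp (⟨hz, ·⟩) (⟨hz, ·⟩)
  have hinter : {z ∈ normSet (p * m) | π ∣ z} ∩ {z ∈ normSet (p * m) | star π ∣ z} =
      {z ∈ normSet (p * m) | (p : GaussianInt) ∣ z} := by
    ext z
    constructor
    · rintro ⟨⟨hz, h⟩, -, h'⟩
      exact ⟨hz, natCast_dvd_of_dvd_of_star_dvd hp (by omega) hπ h h'⟩
    · rintro ⟨hz, h⟩
      rw [← hπp] at h
      exact ⟨⟨hz, dvd_of_mul_right_dvd h⟩, hz, dvd_of_mul_left_dvd h⟩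
  have hfin (ρ : GaussianInt) : {z ∈ normSet (p * m) | ρ ∣ z}.Finite :=
    (finite_normSet _).subset (Set.sep_subset _ _)
  have := Set.ncard_union_add_ncard_inter _ _ (hfin π) (hfin (star π))
  rw [hunion, hinter, ncard_normSet_mul_sep_natCast_dvd hp.pos, hcount π hπ,
    hcount _ hπ'] at this
  omega

theorem ncard_normSet_prime_mul {p : ℕ} (hp : p.Prime) (m : ℕ) :
    ((normSet (p * m)).ncard : ℤ) = (1 + χ₄ p) * (normSet m).ncard -
      χ₄ p * ((if p ∣ m then (normSet (m / p)).ncard else 0 : ℕ) : ℤ) := by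
  rcases hp.eq_two_or_odd' with rfl | hodd
  · rw [ncard_normSet_two_mul, show χ₄ (2 : ℕ) = 0 by decide]
    ring
  obtain hp1 | hp3 : p % 4 = 1 ∨ p % 4 = 3 := by have := Nat.odd_iff.1 hodd; omega
  · rw [χ₄_nat_one_mod_four hp1]
    have := ncard_normSet_mul_of_mod_four_eq_one hp hp1 m
    omega
  · rw [ncard_normSet_mul_of_mod_four_eq_three hp hp3, χ₄_nat_three_mod_four hp3]
    ring

theorem ncard_normSet_prime_pow_mul {p n : ℕ} (hp : p.Prime) (hpn : ¬p ∣ n) (a : ℕ) :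
    ((normSet (p ^ a * n)).ncard : ℤ) = (∑ j ∈ range (a + 1), χ₄ p ^ j) * (normSet n).ncard := by
  induction a using Nat.twoStepInduction with
  | zero => simp
  | one =>
    rw [pow_one, ncard_normSet_prime_mul hp, if_neg hpn]
    simp [sum_range_succ]
  | more a ih₀ ih₁ =>
    have hdvd : p ∣ p ^ (a + 1) * n := dvd_mul_of_dvd_left (dvd_pow_self p a.succ_ne_zero) n
    have hdiv : p ^ (a + 1) * n / p = p ^ a * n := by
      rw [pow_succ', mul_assoc, Nat.mul_div_cancel_left _ hp.pos]
    rw [show p ^ (a + 2) * n = p * (p ^ (a + 1) * n) by ring, ncard_normSet_prime_mul hp,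
      if_pos hdvd, hdiv, ih₁, ih₀]
    simp only [sum_range_succ]
    ring

theorem ncard_normSet_eq_four_mul_sum_divisors {m : ℕ} (hm : m ≠ 0) :
    ((normSet m).ncard : ℤ) = 4 * ∑ d ∈ m.divisors, χ₄ d := by
  induction m using Nat.recOnPrimePow with
  | zero => contradiction
  | one => simp [ncard_normSet_one]
  | prime_pow_mul n p a hp hpn _ ih =>
    have hn : n ≠ 0 := by rintro rfl; simp at hm
    have hcop : (p ^ a).Coprime n := Nat.Coprime.pow_left a ((hp.coprime_iff_not_dvd).2 hpn)
    rw [ncard_normSet_prime_pow_mul hp hpn, ih hn, DirichletCharacter.sum_divisors_mul χ₄ hcop,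
      DirichletCharacter.sum_divisors_prime_pow χ₄ hp]
    ring

end GaussianInt

theorem sum_two_squares_count (m : ℕ) (hm : 0 < m) :
    (Set.ncard {p : ℤ × ℤ | p.1 ^ 2 + p.2 ^ 2 = (m : ℤ)} : ℤ) =
      4 * ∑ d ∈ (Nat.divisors m).filter (fun d => Odd d), (-1 : ℤ) ^ ((d - 1) / 2) := by
  rw [← GaussianInt.image_reIm_normSet, Set.ncard_image_of_injective _ GaussianInt.reIm_injective,
    GaussianInt.ncard_normSet_eq_four_mul_sum_divisors hm.ne', sum_χ₄_eq_sum_odd_neg_one_pow]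
end

section
/- For every natural number n, the number of pairs (x,y) ∈ ℕ² with T_x + 4T_y = n equals one eighth of the number of pairs (x,y) ∈ ℤ² with x² + y² = 8n+5. -/
open scoped BigOperators

lemma tri_iff (n x y : ℕ) :
    x*(x+1)/2 + 4*(y*(y+1)/2) = n ↔ ((2*x+1:ℤ))^2 + (2*(2*y+1))^2 = 8*n+5 := by
  obtain ⟨a, ha⟩ := Nat.even_mul_succ_self x
  obtain ⟨b, hb⟩ := Nat.even_mul_succ_self y
  have hx : x*(x+1)/2 = a := by omega
  have hy : y*(y+1)/2 = b := by omega
  rw [hx, hy]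
  have ha' : (x:ℤ)*(x+1) = a + a := by exact_mod_cast ha
  have hb' : (y:ℤ)*(y+1) = b + b := by exact_mod_cast hb
  constructor
  · intro h
    have h' : (a:ℤ) + 4*b = n := by exact_mod_cast h
    linear_combination 4*ha' + 16*hb' + 8*h'
  · intro h
    have h8 : 8*((a:ℤ) + 4*b) = 8*n := by linear_combination h - 4*ha' - 16*hb'
    have : (a:ℤ) + 4*b = n := by linarith
    exact_mod_cast this

/-- helper: a odd, b even, a²+b²=8n+5 forces the canonical form. -/
lemma odd_even_case (n : ℕ) (a b : ℤ) (hab : a^2 + b^2 = 8*n+5)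
    (ha : Odd a) (hb : Even b) :
    ∃ (s1 s2 : Bool) (x y : ℕ), (x*(x+1)/2 + 4*(y*(y+1)/2) = n) ∧
      a = (cond s1 ((2*x+1:ℤ)) (-(2*x+1))) ∧
      b = (cond s2 ((2*(2*y+1):ℤ)) (-(2*(2*y+1)))) := by
  obtain ⟨u, hu⟩ := ha
  obtain ⟨v, hv⟩ := hb
  obtain ⟨w, hw⟩ := Int.even_mul_succ_self u
  have ha2 : a^2 = 8*w+1 := by rw [hu]; linear_combination 4*hw
  have hb2 : b^2 = 4*v^2 := by rw [hv]; ring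
  have hv2 : v^2 = 2*((n:ℤ) - w) + 1 := by linarith
  have hvodd : Odd v := by
    rcases Int.even_or_odd v with h | h
    · exfalso
      obtain ⟨t, ht⟩ := h
      have h4 : 4*(t*t) = 2*((n:ℤ) - w) + 1 := by rw [← hv2, ht]; ring
      omega
    · exact h
  -- natural number coordinates
  have hna : Odd a.natAbs := Int.natAbs_odd.mpr ⟨u, hu⟩
  have hnv : Odd v.natAbs := Int.natAbs_odd.mpr hvodd
  obtain ⟨x, hx⟩ := hna
  obtain ⟨y, hy⟩ := hnv
  refine ⟨decide (0 < a), decide (0 < v), x, y, ?_, ?_, ?_⟩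
  · rw [tri_iff n x y]
    have hxa : a^2 = ((2*x+1 : ℤ))^2 := by
      rcases Int.natAbs_eq a with h | h <;> rw [h] <;>
        · push_cast [hx]; ring
    have hyv : v^2 = ((2*y+1 : ℤ))^2 := by
      rcases Int.natAbs_eq v with h | h <;> rw [h] <;>
        · push_cast [hy]; ring
    have : ((2*x+1:ℤ))^2 + (2*(2*y+1))^2 = a^2 + b^2 := by
      rw [hxa, hb2, hyv]; ring
    rw [this, hab]
  · by_cases h : 0 < a <;> simp [h] <;> omega
  · have hbv : b = 2*v := by omega
    by_cases h : 0 < v <;> simp [h] <;> omega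

noncomputable def tmap (n : ℕ) :
    Bool × Bool × Bool × {p : ℕ × ℕ // p.1 * (p.1 + 1) / 2 + 4 * (p.2 * (p.2 + 1) / 2) = n} →
    {p : ℤ × ℤ // p.1 ^ 2 + p.2 ^ 2 = (8 * n + 5 : ℤ)} :=
  fun ⟨s1, s2, sw, ⟨⟨x, y⟩, h⟩⟩ =>
    ⟨(cond sw (cond s1 ((2*x+1:ℤ)) (-(2*x+1))) (cond s2 ((2*(2*y+1):ℤ)) (-(2*(2*y+1)))),
      cond sw (cond s2 ((2*(2*y+1):ℤ)) (-(2*(2*y+1)))) (cond s1 ((2*x+1:ℤ)) (-(2*x+1)))), by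
      have base := (tri_iff n x y).mp h
      rcases s1 <;> rcases s2 <;> rcases sw <;> simp only [cond] <;> linear_combination base⟩

lemma tmap_bij (n : ℕ) : Function.Bijective (tmap n) := by
  constructor
  · rintro ⟨s1, s2, sw, ⟨⟨x, y⟩, h⟩⟩ ⟨t1, t2, tw, ⟨⟨x', y'⟩, h'⟩⟩ heq
    simp only [tmap, Subtype.mk.injEq, Prod.mk.injEq] at heq
    obtain ⟨e1, e2⟩ := heq
    rcases s1 <;> rcases s2 <;> rcases sw <;> rcases t1 <;> rcases t2 <;> rcases tw <;>
      simp only [cond_true, cond_false] at e1 e2 <;>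
      first
      | (exfalso; omega)
      | (obtain ⟨hx, hy⟩ : x = x' ∧ y = y' := by omega
         subst hx; subst hy; rfl)
  · rintro ⟨⟨a, b⟩, hab⟩
    have hab' : a^2 + b^2 = 8*(n:ℤ)+5 := hab
    rcases Int.even_or_odd a with hea | hoa <;> rcases Int.even_or_odd b with heb | hob
    · exfalso
      obtain ⟨u, hu⟩ := hea; obtain ⟨v, hv⟩ := heb
      have : 2*(2*(u*u) + 2*(v*v)) = 8*(n:ℤ)+5 := by rw [← hab', hu, hv]; ring
      omega
    · obtain ⟨s1, s2, x, y, hm, hA, hB⟩ := odd_even_case n b a (by linarith) hob hea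
      refine ⟨(s1, s2, false, ⟨(x, y), hm⟩), ?_⟩
      apply Subtype.ext
      simp only [tmap, cond_true, cond_false, Prod.mk.injEq]
      exact ⟨hB.symm, hA.symm⟩
    · obtain ⟨s1, s2, x, y, hm, hA, hB⟩ := odd_even_case n a b hab' hoa heb
      refine ⟨(s1, s2, true, ⟨(x, y), hm⟩), ?_⟩
      apply Subtype.ext
      simp only [tmap, cond_true, cond_false, Prod.mk.injEq]
      exact ⟨hA.symm, hB.symm⟩
    · exfalso
      obtain ⟨u, hu⟩ := hoa; obtain ⟨v, hv⟩ := hob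
      have : 2*(2*(u*u) + 2*u + 2*(v*v) + 2*v + 1) = 8*(n:ℤ)+5 := by
        rw [← hab', hu, hv]; ring
      omega

theorem t2_eq_r2_div_eight (n : ℕ) :
    8 * Set.ncard {p : ℕ × ℕ | p.1 * (p.1 + 1) / 2 + 4 * (p.2 * (p.2 + 1) / 2) = n} =
      Set.ncard {p : ℤ × ℤ | p.1 ^ 2 + p.2 ^ 2 = (8 * n + 5 : ℤ)} := by
  have := Nat.card_eq_of_bijective _ (tmap_bij n)
  rw [Nat.card_prod, Nat.card_prod, Nat.card_prod] at this
  simp only [Nat.card_eq_fintype_card, Fintype.card_bool] at this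
  rw [← Nat.card_coe_set_eq, ← Nat.card_coe_set_eq]
  have e1 : Nat.card ↑{p : ℕ × ℕ | p.1 * (p.1 + 1) / 2 + 4 * (p.2 * (p.2 + 1) / 2) = n} =
      Nat.card {p : ℕ × ℕ // p.1 * (p.1 + 1) / 2 + 4 * (p.2 * (p.2 + 1) / 2) = n} := rfl
  have e2 : Nat.card ↑{p : ℤ × ℤ | p.1 ^ 2 + p.2 ^ 2 = (8 * n + 5 : ℤ)} =
      Nat.card {p : ℤ × ℤ // p.1 ^ 2 + p.2 ^ 2 = (8 * n + 5 : ℤ)} := rfl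
  omega
end

section
/- For every complex number q with |q| < 1, ∑_{n=0}^∞ q^{n(n+1)/2} = (q²;q²)_∞ / (q;q²)_∞. -/
/-!
Write `T(m) = m(m+1)/2` for every integer `m` (so `T(-m-1) = T(m)`) and `[n, k]_u` for the
Gaussian binomial coefficient. Comparing coefficients of `w` with the Pascal rules gives the finite
Jacobi triple product `∑_{k ≤ 2N} [2N, k]_u u^{T(k-N)} w^k = ∏_{k<N} (1 + w u^{k+1})(w + u^k)`
in any commutative ring. At `w = 1`, folding the sum at `k = N` leaves two sums of
`[2N, N+j+m]_u u^{T(m)}` (`j = 0, 1`) whose total is `(-u;u)_N (-1;u)_N`. For `‖u‖ < 1` these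
central coefficients are uniformly bounded and tend to `1/(u;u)_∞`, so Tannery's theorem gives
`2ψ(u)/(u;u)_∞ = 2(-u;u)_∞²`. Finally `(u;u)_∞(-u;u)_∞ = (u²;u²)_∞` and, splitting even and odd
factors, `(u;u²)_∞(u²;u²)_∞ = (u;u)_∞`; together they give Euler's `(u;u²)_∞(-u;u)_∞ = 1`.
-/

open scoped BigOperators

/-- The infinite q-Pochhammer symbol `(a; q)_∞ = ∏_{k=0}^∞ (1 - a qᵏ)`. -/
noncomputable def qPochInf (a q : ℂ) : ℂ := ∏' k : ℕ, (1 - a * q ^ k)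

open Filter Finset Topology Polynomial

def qPoch {R : Type*} [CommRing R] (a q : R) (n : ℕ) : R := ∏ i ∈ range n, (1 - a * q ^ i)

lemma qPoch_succ {R : Type*} [CommRing R] (a q : R) (n : ℕ) :
    qPoch a q (n + 1) = qPoch a q n * (1 - a * q ^ n) :=
  prod_range_succ _ _

section GaussBinom

variable {R : Type*} [CommRing R] (u : R)

def gaussBinom : ℕ → ℕ → R
  | _, 0 => 1
  | 0, _ + 1 => 0
  | n + 1, k + 1 => gaussBinom n k + u ^ (k + 1) * gaussBinom n (k + 1)

@[simp] lemma gaussBinom_zero_right (n : ℕ) : gaussBinom u n 0 = 1 := by cases n <;> rfl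

lemma gaussBinom_succ_succ (n k : ℕ) :
    gaussBinom u (n + 1) (k + 1) = gaussBinom u n k + u ^ (k + 1) * gaussBinom u n (k + 1) :=
  rfl

lemma gaussBinom_eq_zero_of_lt {n k : ℕ} (h : n < k) : gaussBinom u n k = 0 := by
  obtain ⟨k, rfl⟩ := Nat.exists_eq_add_one_of_ne_zero (Nat.ne_zero_of_lt h)
  induction n generalizing k with
  | zero => rfl
  | succ n ih =>
    obtain ⟨k, rfl⟩ := Nat.exists_eq_add_one_of_ne_zero (by omega : k ≠ 0)
    rw [gaussBinom_succ_succ, ih _ (by omega), ih _ (by omega), mul_zero, add_zero]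

@[simp] lemma gaussBinom_self (n : ℕ) : gaussBinom u n n = 1 := by
  induction n with
  | zero => rfl
  | succ n ih =>
    rw [gaussBinom_succ_succ, ih, gaussBinom_eq_zero_of_lt u n.lt_succ_self, mul_zero, add_zero]

/-- The second Pascal rule; for `n < k` both sides vanish, so the truncated `n - k` is harmless. -/
lemma gaussBinom_succ_succ' (n k : ℕ) :
    gaussBinom u (n + 1) (k + 1) = u ^ (n - k) * gaussBinom u n k + gaussBinom u n (k + 1) := by
  induction n generalizing k with
  | zero => cases k <;> simp [gaussBinom_succ_succ, gaussBinom_eq_zero_of_lt]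
  | succ n ih =>
    rcases k with _ | k
    · have ih₀ := ih 0
      simp only [gaussBinom_zero_right, Nat.sub_zero, mul_one] at ih₀ ⊢
      linear_combination gaussBinom_succ_succ u (n + 1) 0 + u * ih₀ - gaussBinom_succ_succ u n 0
        + gaussBinom_zero_right u (n + 1) - gaussBinom_zero_right u n
    rcases lt_or_ge k n with hkn | hkn
    · obtain ⟨m, rfl⟩ := Nat.exists_eq_add_of_lt hkn
      have ih₀ := ih k
      have ih₁ := ih (k + 1)
      rw [show k + m + 1 - k = m + 1 by omega, show k + m + 1 - (k + 1) = m by omega] at *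
      rw [show k + m + 1 + 1 - (k + 1) = m + 1 by omega]
      linear_combination gaussBinom_succ_succ u (k + m + 1 + 1) (k + 1) + ih₀
        + u ^ (k + 2) * ih₁
        - u ^ (m + 1) * gaussBinom_succ_succ u (k + m + 1) k
        - gaussBinom_succ_succ u (k + m + 1) (k + 1)
    · rw [gaussBinom_succ_succ, Nat.sub_eq_zero_of_le (by omega : n + 1 ≤ k + 1),
        gaussBinom_eq_zero_of_lt u (by omega : n + 1 < k + 1 + 1)]
      ring

lemma gaussBinom_symm {n k : ℕ} (h : k ≤ n) : gaussBinom u n (n - k) = gaussBinom u n k := by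
  induction n generalizing k with
  | zero => obtain rfl := Nat.le_zero.mp h; rfl
  | succ n ih =>
    rcases k with _ | k
    · simp
    rcases (Nat.le_of_lt_succ h).lt_or_eq with hkn | rfl
    · rw [show n + 1 - (k + 1) = n - (k + 1) + 1 by omega, gaussBinom_succ_succ',
        show n - (n - (k + 1)) = k + 1 by omega, ih hkn, show n - (k + 1) + 1 = n - k by omega,
        ih hkn.le, gaussBinom_succ_succ]
      ring
    · simp

lemma one_sub_pow_mul_gaussBinom_succ (n k : ℕ) :
    (1 - u ^ (k + 1)) * gaussBinom u (n + 1) (k + 1) = (1 - u ^ (n + 1)) * gaussBinom u n k := by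
  rcases le_or_gt k n with hkn | hkn
  · have pascal₁ := gaussBinom_succ_succ u n k
    have pascal₂ := gaussBinom_succ_succ' u n k
    have hpow : u ^ (k + 1) * u ^ (n - k) = u ^ (n + 1) := by
      rw [← pow_add]; congr 1; omega
    linear_combination pascal₁ - u ^ (k + 1) * pascal₂ - gaussBinom u n k * hpow
  · rw [gaussBinom_eq_zero_of_lt u hkn, gaussBinom_eq_zero_of_lt u (by omega)]
    ring

lemma gaussBinom_mul_qPoch_mul_qPoch {n k : ℕ} (h : k ≤ n) :
    gaussBinom u n k * (qPoch u u k * qPoch u u (n - k)) = qPoch u u n := by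
  induction k generalizing n with
  | zero => simp [qPoch]
  | succ k ih =>
    obtain ⟨n, rfl⟩ := Nat.exists_eq_add_one_of_ne_zero (by omega : n ≠ 0)
    have hrec := one_sub_pow_mul_gaussBinom_succ u n k
    rw [show n + 1 - (k + 1) = n - k by omega, qPoch_succ, qPoch_succ, ← ih (by omega : k ≤ n)]
    linear_combination (qPoch u u k * qPoch u u (n - k)) * hrec

lemma gaussBinom_add_two (n k : ℕ) :
    gaussBinom u (n + 2) (k + 2) =
      u ^ (n - k) * gaussBinom u n k + (1 + u ^ (n + 1)) * gaussBinom u n (k + 1)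
        + u ^ (k + 2) * gaussBinom u n (k + 2) := by
  have pascal₁ := gaussBinom_succ_succ u (n + 1) (k + 1)
  have pascal₂ := gaussBinom_succ_succ' u n k
  have pascal₂' := gaussBinom_succ_succ' u n (k + 1)
  rcases lt_or_ge k n with hkn | hkn
  · have hpow : u ^ (k + 2) * u ^ (n - (k + 1)) = u ^ (n + 1) := by
      rw [← pow_add]; congr 1; omega
    linear_combination pascal₁ + pascal₂ + u ^ (k + 2) * pascal₂'
      + gaussBinom u n (k + 1) * hpow
  · rw [gaussBinom_eq_zero_of_lt u (by omega : n < k + 1)] at pascal₂ pascal₂' ⊢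
    linear_combination pascal₁ + pascal₂ + u ^ (k + 2) * pascal₂'

end GaussBinom

section Jacobi

-- `m(m+1) ≥ 0` for every integer `m`, so `toNat` loses nothing.
def triangular (m : ℤ) : ℕ := (m * (m + 1) / 2).toNat

lemma two_mul_triangular (m : ℤ) : 2 * (triangular m : ℤ) = m * (m + 1) := by
  have heven : 2 ∣ m * (m + 1) := (Int.even_mul_succ_self m).two_dvd
  have hnonneg : 0 ≤ m * (m + 1) := by
    rcases le_or_gt 0 m with hm | hm <;> nlinarith
  rw [triangular]
  generalize m * (m + 1) = t at heven hnonneg ⊢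
  rw [Int.toNat_of_nonneg (by omega)]
  omega

lemma triangular_natCast (m : ℕ) : triangular m = m * (m + 1) / 2 := by
  have h : 2 * triangular m = m * (m + 1) := by exact_mod_cast two_mul_triangular m
  omega

lemma triangular_neg_sub_one (m : ℤ) : triangular (-m - 1) = triangular m := by
  rw [triangular, triangular]
  ring_nf

lemma triangular_add_one (m : ℤ) : (triangular (m + 1) : ℤ) = triangular m + m + 1 := by
  linarith [two_mul_triangular (m + 1), two_mul_triangular m]

variable {R : Type*} [CommRing R] (u : R)

lemma pow_mul_pow_triangular {m m' : ℤ} {a b : ℕ} (hm : m' = m + 1)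
    (hab : (a : ℤ) + m + 1 = b) :
    u ^ a * u ^ triangular m' = u ^ b * u ^ triangular m := by
  subst hm
  rw [← pow_add, ← pow_add]
  congr 1
  have := triangular_add_one m
  omega

def jacobiCoeff (N k : ℕ) : R := gaussBinom u (2 * N) k * u ^ triangular ((k : ℤ) - N)

lemma jacobiCoeff_eq_zero_of_lt {N k : ℕ} (h : 2 * N < k) : jacobiCoeff u N k = 0 := by
  rw [jacobiCoeff, gaussBinom_eq_zero_of_lt u h, zero_mul]

lemma jacobiCoeff_succ_zero (N : ℕ) : jacobiCoeff u (N + 1) 0 = u ^ N * jacobiCoeff u N 0 := by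
  have hpow : u ^ N * u ^ triangular ((0 : ℕ) - (N : ℤ))
      = u ^ 0 * u ^ triangular ((0 : ℕ) - ((N + 1 : ℕ) : ℤ)) :=
    pow_mul_pow_triangular u (by omega) (by omega)
  simpa [jacobiCoeff] using hpow.symm

lemma jacobiCoeff_succ_one (N : ℕ) :
    jacobiCoeff u (N + 1) 1
      = u ^ N * jacobiCoeff u N 1 + (1 + u ^ (2 * N + 1)) * jacobiCoeff u N 0 := by
  have pascal₁ := gaussBinom_succ_succ u (2 * N + 1) 0
  have pascal₂ := gaussBinom_succ_succ' u (2 * N) 0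
  have hpow : u ^ N * u ^ triangular ((1 : ℕ) - (N : ℤ))
      = u ^ 1 * u ^ triangular ((0 : ℕ) - (N : ℤ)) :=
    pow_mul_pow_triangular u (by omega) (by omega)
  have harg : ((1 : ℕ) : ℤ) - ((N + 1 : ℕ) : ℤ) = (0 : ℕ) - N := by omega
  simp only [gaussBinom_zero_right, Nat.sub_zero, zero_add, pow_one] at pascal₁ pascal₂ hpow
  rw [jacobiCoeff, jacobiCoeff, jacobiCoeff, harg, show 2 * (N + 1) = 2 * N + 1 + 1 by ring,
    gaussBinom_zero_right]
  linear_combination u ^ triangular ((0 : ℕ) - (N : ℤ)) * (pascal₁ + u * pascal₂)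
    - gaussBinom u (2 * N) 1 * hpow

lemma jacobiCoeff_succ_add_two (N k : ℕ) :
    jacobiCoeff u (N + 1) (k + 2) = u ^ N * jacobiCoeff u N (k + 2)
      + (1 + u ^ (2 * N + 1)) * jacobiCoeff u N (k + 1) + u ^ (N + 1) * jacobiCoeff u N k := by
  have hpow₂ : u ^ N * u ^ triangular ((k + 2 : ℕ) - (N : ℤ))
      = u ^ (k + 2) * u ^ triangular ((k + 1 : ℕ) - (N : ℤ)) :=
    pow_mul_pow_triangular u (by omega) (by omega)
  have hpow₀ :
      u ^ (2 * N - k) * u ^ triangular ((k + 1 : ℕ) - (N : ℤ)) * gaussBinom u (2 * N) k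
      = u ^ (N + 1) * u ^ triangular ((k : ℤ) - N) * gaussBinom u (2 * N) k := by
    rcases le_or_gt k (2 * N) with hk | hk
    · exact congrArg (· * _) (pow_mul_pow_triangular u (by omega) (by omega))
    · rw [gaussBinom_eq_zero_of_lt u hk, mul_zero, mul_zero]
  have harg : ((k + 2 : ℕ) : ℤ) - ((N + 1 : ℕ) : ℤ) = (k + 1 : ℕ) - N := by omega
  rw [jacobiCoeff, jacobiCoeff, jacobiCoeff, jacobiCoeff, harg,
    show 2 * (N + 1) = 2 * N + 2 by ring, gaussBinom_add_two]
  linear_combination hpow₀ - gaussBinom u (2 * N) (k + 2) * hpow₂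

theorem sum_jacobiCoeff_mul_pow (N : ℕ) (w : R) :
    ∑ k ∈ range (2 * N + 1), jacobiCoeff u N k * w ^ k =
      ∏ k ∈ range N, (1 + w * u ^ (k + 1)) * (w + u ^ k) := by
  have hcoeff (N n : ℕ) :
      (∑ k ∈ range (2 * N + 1), C (jacobiCoeff u N k) * X ^ k).coeff n = jacobiCoeff u N n := by
    simp only [finsetSum_coeff, coeff_C_mul_X_pow, sum_ite_eq, mem_range]
    split_ifs with h
    · rfl
    · exact (jacobiCoeff_eq_zero_of_lt u (by omega)).symm
  suffices h : ∑ k ∈ range (2 * N + 1), C (jacobiCoeff u N k) * X ^ k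
      = ∏ k ∈ range N, (1 + X * C (u ^ (k + 1))) * (X + C (u ^ k)) by
    simpa [eval_finsetSum, eval_prod] using congrArg (eval w) h
  induction N with
  | zero => simp [jacobiCoeff, triangular]
  | succ N ih =>
    set p := ∑ k ∈ range (2 * N + 1), C (jacobiCoeff u N k) * X ^ k
    have hstep : p * ((1 + X * C (u ^ (N + 1))) * (X + C (u ^ N)))
        = C (u ^ N) * p + C (1 + u ^ (2 * N + 1)) * (p * X) + C (u ^ (N + 1)) * (p * X ^ 2) := by
      simp only [map_add, map_one, map_pow]
      ring
    have hp (n : ℕ) : p.coeff n = jacobiCoeff u N n := hcoeff N n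
    rw [prod_range_succ, ← ih, hstep]
    ext n
    rw [hcoeff]
    rcases n with _ | _ | n <;>
      simp only [zero_add, coeff_add, coeff_C_mul, coeff_mul_X, coeff_mul_X_zero,
        coeff_mul_X_pow', hp,
        jacobiCoeff_succ_zero, jacobiCoeff_succ_one, jacobiCoeff_succ_add_two] <;>
      simp

theorem sum_gaussBinom_central_mul_pow_triangular (N : ℕ) :
    ∑ m ∈ range (N + 1), gaussBinom u (2 * N) (N + m) * u ^ (m * (m + 1) / 2)
      + ∑ m ∈ range N, gaussBinom u (2 * N) (N + 1 + m) * u ^ (m * (m + 1) / 2)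
      = qPoch (-u) u N * qPoch (-1) u N := by
  have hupper (m : ℕ) :
      jacobiCoeff u N (N + m) = gaussBinom u (2 * N) (N + m) * u ^ (m * (m + 1) / 2) := by
    rw [jacobiCoeff, ← triangular_natCast]
    push_cast
    ring_nf
  have hlower {m : ℕ} (hm : m ∈ range N) :
      jacobiCoeff u N (N - 1 - m) = gaussBinom u (2 * N) (N + 1 + m) * u ^ (m * (m + 1) / 2) := by
    have hm := mem_range.mp hm
    rw [jacobiCoeff, ← triangular_natCast, ← triangular_neg_sub_one,
      ← gaussBinom_symm u (by omega : N + 1 + m ≤ 2 * N),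
      show 2 * N - (N + 1 + m) = N - 1 - m by omega]
    congr 3
    push_cast [show m ≤ N - 1 by omega, show 1 ≤ N by omega]
    ring
  have h := sum_jacobiCoeff_mul_pow u N 1
  rw [show 2 * N + 1 = N + (N + 1) by ring, sum_range_add, ← sum_range_reflect, add_comm] at h
  simp only [mul_one, one_pow, one_mul] at h
  rw [sum_congr rfl fun m _ => (hupper m).symm, sum_congr rfl fun m hm => (hlower hm).symm, h,
    qPoch, qPoch, ← prod_mul_distrib]
  refine prod_congr rfl fun k _ => ?_
  ring

end Jacobi

section InfiniteProduct

variable {q : ℂ}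

lemma one_sub_mul_pow_ne_zero {a : ℂ} (ha : ‖a‖ < 1) (hq : ‖q‖ ≤ 1) (k : ℕ) :
    1 - a * q ^ k ≠ 0 := by
  have hlt : ‖a * q ^ k‖ < 1 := by
    rw [norm_mul, norm_pow]
    exact (mul_le_of_le_one_right (norm_nonneg a) (pow_le_one₀ (norm_nonneg q) hq)).trans_lt ha
  intro h
  rw [← sub_eq_zero.mp h, norm_one] at hlt
  exact hlt.false

lemma summable_norm_mul_pow (a : ℂ) (hq : ‖q‖ < 1) :
    Summable fun k : ℕ => ‖a * q ^ k‖ := by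
  simpa [norm_mul, norm_pow] using
    (summable_geometric_of_lt_one (norm_nonneg q) hq).mul_left ‖a‖

lemma multipliable_one_sub_mul_pow (a : ℂ) (hq : ‖q‖ < 1) :
    Multipliable fun k : ℕ => 1 - a * q ^ k := by
  simpa [sub_eq_add_neg] using
    multipliable_one_add_of_summable (f := fun k => -(a * q ^ k))
      (by simpa using summable_norm_mul_pow a hq)

lemma qPochInf_ne_zero {a : ℂ} (ha : ‖a‖ < 1) (hq : ‖q‖ < 1) : qPochInf a q ≠ 0 := by
  simpa [qPochInf, sub_eq_add_neg] using
    tprod_one_add_ne_zero_of_summable (f := fun k => -(a * q ^ k))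
    (fun k => by simpa [sub_eq_add_neg] using one_sub_mul_pow_ne_zero ha hq.le k)
    (by simpa using summable_norm_mul_pow a hq)

lemma tendsto_qPoch (a : ℂ) (hq : ‖q‖ < 1) :
    Tendsto (qPoch a q) atTop (𝓝 (qPochInf a q)) :=
  (multipliable_one_sub_mul_pow a hq).tendsto_prod_tprod_nat

lemma qPochInf_eq_one_sub_mul (a : ℂ) (hq : ‖q‖ < 1) :
    qPochInf a q = (1 - a) * qPochInf (a * q) q := by
  have hshift : Multipliable fun k : ℕ => 1 - a * q ^ (k + 1) :=
    (multipliable_one_sub_mul_pow (a * q) hq).congr fun k => by ring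
  rw [qPochInf, tprod_eq_zero_mul' (f := fun k => 1 - a * q ^ k) hshift, pow_zero, mul_one,
    qPochInf, tprod_congr fun k : ℕ => (by ring : 1 - a * q ^ (k + 1) = 1 - a * q * q ^ k)]

lemma qPochInf_mul_qPochInf_neg (a : ℂ) (hq : ‖q‖ < 1) :
    qPochInf a q * qPochInf (-a) q = qPochInf (a ^ 2) (q ^ 2) := by
  rw [qPochInf, qPochInf, qPochInf, ← (multipliable_one_sub_mul_pow a hq).tprod_mul
    (multipliable_one_sub_mul_pow (-a) hq)]
  exact tprod_congr fun k => by ring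

lemma qPochInf_mul_qPochInf_mul (a : ℂ) (hq : ‖q‖ < 1) :
    qPochInf a (q ^ 2) * qPochInf (a * q) (q ^ 2) = qPochInf a q := by
  have hq2 : ‖q ^ 2‖ < 1 := by rw [norm_pow]; exact pow_lt_one₀ (norm_nonneg q) hq two_ne_zero
  have heven : Multipliable fun k : ℕ => 1 - a * q ^ (2 * k) :=
    (multipliable_one_sub_mul_pow a hq2).congr fun k => by ring
  have hodd : Multipliable fun k : ℕ => 1 - a * q ^ (2 * k + 1) :=
    (multipliable_one_sub_mul_pow (a * q) hq2).congr fun k => by ring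
  rw [qPochInf, qPochInf, qPochInf, ← tprod_even_mul_odd (f := fun k => 1 - a * q ^ k) heven hodd,
    tprod_congr fun k : ℕ => (by ring : 1 - a * (q ^ 2) ^ k = 1 - a * q ^ (2 * k)),
    tprod_congr fun k : ℕ => (by ring : 1 - a * q * (q ^ 2) ^ k = 1 - a * q ^ (2 * k + 1))]

end InfiniteProduct

lemma le_mul_succ_div_two (m : ℕ) : m ≤ m * (m + 1) / 2 := by
  rw [Nat.le_div_iff_mul_le two_pos]
  rcases m with _ | m
  · rfl
  · exact Nat.mul_le_mul_left _ (by omega)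

section Limit

variable {u : ℂ} (hu : ‖u‖ < 1)
include hu

lemma qPoch_ne_zero (n : ℕ) : qPoch u u n ≠ 0 :=
  prod_ne_zero_iff.mpr fun i _ => one_sub_mul_pow_ne_zero hu hu.le i

lemma gaussBinom_eq_mul_inv {n k : ℕ} (h : k ≤ n) :
    gaussBinom u n k = qPoch u u n * (qPoch u u k)⁻¹ * (qPoch u u (n - k))⁻¹ := by
  rw [← gaussBinom_mul_qPoch_mul_qPoch u h]
  field_simp [qPoch_ne_zero hu]

lemma exists_norm_gaussBinom_le : ∃ C, ∀ n k, ‖gaussBinom u n k‖ ≤ C := by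
  have hP := tendsto_qPoch u hu
  obtain ⟨A, hA⟩ := isBounded_iff_forall_norm_le.mp (Metric.isBounded_range_of_tendsto _ hP)
  obtain ⟨B, hB⟩ := isBounded_iff_forall_norm_le.mp
    (Metric.isBounded_range_of_tendsto _ (hP.inv₀ (qPochInf_ne_zero hu hu)))
  have hA' (n : ℕ) : ‖qPoch u u n‖ ≤ A := hA _ (Set.mem_range_self n)
  have hB' (n : ℕ) : ‖(qPoch u u n)⁻¹‖ ≤ B := hB _ (Set.mem_range_self n)
  have hA0 : 0 ≤ A := (norm_nonneg _).trans (hA' 0)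
  have hB0 : 0 ≤ B := (norm_nonneg _).trans (hB' 0)
  refine ⟨A * B * B, fun n k => ?_⟩
  rcases le_or_gt k n with h | h
  · rw [gaussBinom_eq_mul_inv hu h, norm_mul, norm_mul]
    exact mul_le_mul (mul_le_mul (hA' n) (hB' k) (norm_nonneg _) hA0) (hB' _) (norm_nonneg _)
      (mul_nonneg hA0 hB0)
  · rw [gaussBinom_eq_zero_of_lt u h, norm_zero]
    positivity

lemma tendsto_gaussBinom {n k : ℕ → ℕ} (hk : Tendsto k atTop atTop)
    (hnk : Tendsto (fun N => n N - k N) atTop atTop) :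
    Tendsto (fun N => gaussBinom u (n N) (k N)) atTop (𝓝 (qPochInf u u)⁻¹) := by
  have hP := tendsto_qPoch u hu
  have hP0 := qPochInf_ne_zero hu hu
  have hn : Tendsto n atTop atTop := tendsto_atTop_mono (fun N => Nat.sub_le _ _) hnk
  have hlim := ((hP.comp hn).mul ((hP.comp hk).inv₀ hP0)).mul ((hP.comp hnk).inv₀ hP0)
  rw [mul_inv_cancel₀ hP0, one_mul] at hlim
  refine hlim.congr' ?_
  filter_upwards [hnk.eventually_ge_atTop 1] with N hN
  exact (gaussBinom_eq_mul_inv hu (by omega)).symm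

lemma tendsto_tsum_gaussBinom_mul_pow_triangular (j : ℕ) :
    Tendsto (fun N : ℕ => ∑' m : ℕ, gaussBinom u (2 * N) (N + j + m) * u ^ (m * (m + 1) / 2))
      atTop (𝓝 ((qPochInf u u)⁻¹ * ∑' m : ℕ, u ^ (m * (m + 1) / 2))) := by
  obtain ⟨C, hC⟩ := exists_norm_gaussBinom_le hu
  rw [← tsum_mul_left]
  refine tendsto_tsum_of_dominated_convergence (bound := fun m => C * ‖u‖ ^ m)
    ((summable_geometric_of_lt_one (norm_nonneg u) hu).mul_left C) (fun m => ?_)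
    (Eventually.of_forall fun N m => ?_)
  · refine (tendsto_gaussBinom hu ?_ ?_).mul_const _
    · exact (tendsto_add_atTop_nat (j + m)).congr fun N => (add_assoc N j m).symm
    · exact tendsto_atTop_mono (fun N => by omega) (tendsto_sub_atTop_nat (j + m))
  · rw [norm_mul, norm_pow]
    exact mul_le_mul (hC _ _) (pow_le_pow_of_le_one (norm_nonneg u) hu.le (le_mul_succ_div_two m))
      (by positivity) ((norm_nonneg _).trans (hC 0 0))

theorem tsum_pow_triangular_eq :
    ∑' m : ℕ, u ^ (m * (m + 1) / 2) = qPochInf u u * qPochInf (-u) u ^ 2 := by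
  have hfold (N : ℕ) :
      ∑' m : ℕ, gaussBinom u (2 * N) (N + 0 + m) * u ^ (m * (m + 1) / 2)
        + ∑' m : ℕ, gaussBinom u (2 * N) (N + 1 + m) * u ^ (m * (m + 1) / 2)
        = qPoch (-u) u N * qPoch (-1) u N := by
    rw [← sum_gaussBinom_central_mul_pow_triangular, tsum_eq_sum (s := range (N + 1)),
      tsum_eq_sum (s := range N)]
    · simp only [add_zero]
    all_goals
      intro m hm
      rw [gaussBinom_eq_zero_of_lt u (by simp at hm; omega), zero_mul]
  have hlim := ((tendsto_tsum_gaussBinom_mul_pow_triangular hu 0).add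
    (tendsto_tsum_gaussBinom_mul_pow_triangular hu 1)).congr hfold
  have h : (qPochInf u u)⁻¹ * ∑' m : ℕ, u ^ (m * (m + 1) / 2)
      + (qPochInf u u)⁻¹ * ∑' m : ℕ, u ^ (m * (m + 1) / 2)
      = qPochInf (-u) u * ((1 - -1) * qPochInf (-u) u) := by
    have h := tendsto_nhds_unique hlim ((tendsto_qPoch (-u) hu).mul (tendsto_qPoch (-1) hu))
    rwa [qPochInf_eq_one_sub_mul (-1) hu, neg_one_mul] at h
  have hP0 := qPochInf_ne_zero hu hu
  field_simp at h
  linear_combination h / 2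

end Limit

theorem gauss_psi (q : ℂ) (hq : ‖q‖ < 1) :
    ∑' n : ℕ, q ^ (n * (n + 1) / 2) = qPochInf (q ^ 2) (q ^ 2) / qPochInf q (q ^ 2) := by
  have hq2 : ‖q ^ 2‖ < 1 := by rw [norm_pow]; exact pow_lt_one₀ (norm_nonneg q) hq two_ne_zero
  have hsq : qPochInf q q * qPochInf (-q) q = qPochInf (q ^ 2) (q ^ 2) :=
    qPochInf_mul_qPochInf_neg q hq
  have hsplit : qPochInf q (q ^ 2) * qPochInf (q ^ 2) (q ^ 2) = qPochInf q q := by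
    simpa [← sq] using qPochInf_mul_qPochInf_mul q hq
  have heuler : qPochInf q (q ^ 2) * qPochInf (-q) q = 1 := by
    refine mul_left_cancel₀ (qPochInf_ne_zero hq2 hq2) ?_
    linear_combination qPochInf (-q) q * hsplit + hsq
  rw [tsum_pow_triangular_eq hq, eq_div_iff (left_ne_zero_of_mul_eq_one heuler)]
  linear_combination (qPochInf q q * qPochInf (-q) q) * heuler + hsq
end

section
/- ∑_{n=0}^∞ (21n + 13) · (n!)⁶ / (8 · ((2n+1)!)³) = π²/6. -/
open scoped Nat
open Filter Topology Real

/-!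
With `F n j = n!⁴ (n+j)!² / ((2n)! (2n+j+1)!²)` and the rational certificate `R`, the pair
`(F, G := R F)` is a WZ pair: `F n j - F (n+1) j = G n j - G n (j+1)`. Since `G n j → 0` as
`j → ∞`, summing over `j` gives `H n - H (n+1) = G n 0` for `H n = ∑ⱼ F n j`, and `G n 0` is the
`n`-th term of the series. Summing over `n` telescopes to `H 0 - lim H = ζ(2) - 0`, because
`F 0 j = 1/(j+1)²` and `F (n+1) j ≤ F n j / 2`.
-/

lemma Antitone.hasSum_sub_add_one {g : ℕ → ℝ} {l : ℝ} (hg : Antitone g)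
    (hl : Tendsto g atTop (𝓝 l)) : HasSum (fun n => g n - g (n + 1)) (g 0 - l) := by
  rw [hasSum_iff_tendsto_nat_of_nonneg (fun n => sub_nonneg.2 (hg n.le_succ))]
  simpa only [Finset.sum_range_sub'] using tendsto_const_nhds.sub hl

lemma hasSum_one_div_add_one_sq :
    HasSum (fun j : ℕ => 1 / ((j : ℝ) + 1) ^ 2) (π ^ 2 / 6) := by
  simpa using (hasSum_nat_add_iff' 1).mpr hasSum_zeta_two

noncomputable def wzF (n j : ℕ) : ℝ :=
  (n ! : ℝ) ^ 4 * ((n + j)! : ℝ) ^ 2 / ((2 * n)! * ((2 * n + j + 1)! : ℝ) ^ 2)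

noncomputable def wzR (n j : ℕ) : ℝ :=
  (2 * (j : ℝ) ^ 3 + (13 * n + 11) * j ^ 2 + (28 * n ^ 2 + 48 * n + 20) * j
      + (21 * n + 13) * (n + 1) ^ 2) / (2 * (2 * n + 1) * (2 * n + j + 2) ^ 2)

noncomputable def wzG (n j : ℕ) : ℝ := wzR n j * wzF n j

lemma wzF_nonneg (n j : ℕ) : 0 ≤ wzF n j := by unfold wzF; positivity

lemma wzF_add_one_left (n j : ℕ) : wzF (n + 1) j =
    (n + 1) ^ 4 * (n + j + 1) ^ 2 /
      ((2 * n + 1) * (2 * n + 2) * (2 * n + j + 2) ^ 2 * (2 * n + j + 3) ^ 2) * wzF n j := by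
  rw [wzF, wzF, show n + 1 + j = n + j + 1 by ring, show 2 * (n + 1) = 2 * n + 1 + 1 by ring,
    show 2 * n + 1 + 1 + j + 1 = 2 * n + j + 1 + 1 + 1 by ring]
  push_cast [Nat.factorial_succ]
  field_simp
  ring

lemma wzF_add_one_right (n j : ℕ) :
    wzF n (j + 1) = (n + j + 1) ^ 2 / (2 * n + j + 2) ^ 2 * wzF n j := by
  rw [wzF, wzF, show n + (j + 1) = n + j + 1 by ring,
    show 2 * n + (j + 1) + 1 = 2 * n + j + 1 + 1 by ring]
  push_cast [Nat.factorial_succ]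
  field_simp
  ring

lemma wzF_sub_wzF_add_one_left (n j : ℕ) :
    wzF n j - wzF (n + 1) j = wzG n j - wzG n (j + 1) := by
  rw [wzG, wzG, wzF_add_one_left, wzF_add_one_right, wzR, wzR]
  push_cast
  field_simp
  ring

lemma wzF_zero_left (j : ℕ) : wzF 0 j = 1 / ((j : ℝ) + 1) ^ 2 := by
  rw [wzF]
  push_cast [Nat.factorial_succ, Nat.factorial_zero]
  field_simp
  ring

lemma wzG_zero_right (n : ℕ) :
    wzG n 0 = (21 * n + 13) * (n ! : ℝ) ^ 6 / (8 * ((2 * n + 1)! : ℝ) ^ 3) := by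
  simp only [wzG, wzR, wzF, add_zero, Nat.cast_zero]
  push_cast [Nat.factorial_succ]
  field_simp
  ring

lemma wzF_add_one_left_le (n j : ℕ) : wzF (n + 1) j ≤ wzF n j / 2 := by
  rw [wzF_add_one_left, div_eq_inv_mul _ (2 : ℝ)]
  refine mul_le_mul_of_nonneg_right ?_ (wzF_nonneg n j)
  rw [div_le_iff₀ (by positivity)]
  have hn : (0 : ℝ) ≤ n := n.cast_nonneg
  have hj : (0 : ℝ) ≤ j := j.cast_nonneg
  have h1 : ((n : ℝ) + j + 1) ^ 2 ≤ (2 * n + j + 2) ^ 2 := by gcongr <;> linarith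
  have h2 : 2 * ((n : ℝ) + 1) ^ 4 ≤ (2 * n + 1) * (2 * n + 2) * (2 * n + j + 3) ^ 2 := by
    have a : 2 * ((n : ℝ) + 1) ^ 2 ≤ (2 * n + 1) * (2 * n + 2) := by nlinarith
    have b : ((n : ℝ) + 1) ^ 2 ≤ (2 * n + j + 3) ^ 2 :=
      pow_le_pow_left₀ (by positivity) (by linarith) 2
    nlinarith [mul_le_mul a b (by positivity) (by positivity)]
  calc ((n : ℝ) + 1) ^ 4 * (n + j + 1) ^ 2
      ≤ ((n : ℝ) + 1) ^ 4 * (2 * n + j + 2) ^ 2 := by gcongr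
    _ ≤ _ := by nlinarith

lemma wzF_le (n j : ℕ) : wzF n j ≤ (1 / 2) ^ n * (1 / ((j : ℝ) + 1) ^ 2) := by
  induction n with
  | zero => simp [wzF_zero_left]
  | succ n ih =>
    calc wzF (n + 1) j ≤ wzF n j / 2 := wzF_add_one_left_le n j
      _ ≤ (1 / 2) ^ n * (1 / ((j : ℝ) + 1) ^ 2) / 2 := by gcongr
      _ = _ := by ring

lemma wzR_le (n j : ℕ) : wzR n j ≤ 11 * ((j : ℝ) + 1) := by
  have hn : (0 : ℝ) ≤ n := n.cast_nonneg
  have hj : (0 : ℝ) ≤ j := j.cast_nonneg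
  rw [wzR, div_le_iff₀ (by positivity)]
  -- coefficientwise in `j`, the numerator is at most `21 (n+1) (j+1) (2n+j+2)²`
  nlinarith [mul_nonneg hn hj, mul_nonneg (mul_nonneg hn hj) hj, mul_nonneg (mul_nonneg hn hn) hj,
    mul_nonneg (mul_nonneg hn hn) hn, mul_nonneg hj (mul_nonneg hj hj)]

lemma wzG_le (n j : ℕ) : wzG n j ≤ 11 * (1 / ((j : ℝ) + 1)) := by
  have hF : wzF n j ≤ 1 / ((j : ℝ) + 1) ^ 2 :=
    (wzF_le n j).trans (mul_le_of_le_one_left (by positivity) (pow_le_one₀ (by norm_num) (by norm_num)))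
  calc wzG n j ≤ 11 * ((j : ℝ) + 1) * (1 / ((j : ℝ) + 1) ^ 2) :=
        mul_le_mul (wzR_le n j) hF (wzF_nonneg n j) (by positivity)
    _ = 11 * (1 / ((j : ℝ) + 1)) := by field_simp

lemma tendsto_wzG_atTop (n : ℕ) : Tendsto (wzG n) atTop (𝓝 0) := by
  refine squeeze_zero (fun j => ?_) (wzG_le n) ?_
  · exact mul_nonneg (by rw [wzR]; positivity) (wzF_nonneg n j)
  · simpa using tendsto_one_div_add_atTop_nhds_zero_nat.const_mul (11 : ℝ)

lemma hasSum_wzF_sub_wzF_add_one_left (n : ℕ) :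
    HasSum (fun j => wzF n j - wzF (n + 1) j) (wzG n 0) := by
  have hanti : Antitone (wzG n) := antitone_nat_of_succ_le fun j => by
    rw [← sub_nonneg, ← wzF_sub_wzF_add_one_left]
    linarith [wzF_add_one_left_le n j, wzF_nonneg n j]
  simpa only [wzF_sub_wzF_add_one_left, sub_zero] using
    hanti.hasSum_sub_add_one (tendsto_wzG_atTop n)

lemma summable_wzF (n : ℕ) : Summable (wzF n) :=
  (hasSum_one_div_add_one_sq.summable.mul_left _).of_nonneg_of_le (wzF_nonneg n) (wzF_le n)

lemma tsum_wzF_sub_tsum_wzF_add_one (n : ℕ) :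
    ∑' j, wzF n j - ∑' j, wzF (n + 1) j = wzG n 0 :=
  ((summable_wzF n).hasSum.sub (summable_wzF (n + 1)).hasSum).unique
    (hasSum_wzF_sub_wzF_add_one_left n)

lemma tendsto_tsum_wzF_atTop : Tendsto (fun n => ∑' j, wzF n j) atTop (𝓝 0) := by
  refine squeeze_zero (fun n => tsum_nonneg (wzF_nonneg n))
    (fun n => hasSum_le (wzF_le n) (summable_wzF n).hasSum
      (hasSum_one_div_add_one_sq.mul_left ((1 / 2) ^ n))) ?_
  simpa using (tendsto_pow_atTop_nhds_zero_of_lt_one (by norm_num : (0 : ℝ) ≤ 1 / 2)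
    (by norm_num)).mul_const (π ^ 2 / 6)

theorem zeilberger_pi_squared :
    ∑' n : ℕ, (21 * (n : ℝ) + 13) * (Nat.factorial n : ℝ) ^ 6 /
        (8 * (Nat.factorial (2 * n + 1) : ℝ) ^ 3) =
      Real.pi ^ 2 / 6 := by
  have hanti : Antitone fun n => ∑' j, wzF n j := antitone_nat_of_succ_le fun n => by
    rw [← sub_nonneg, tsum_wzF_sub_tsum_wzF_add_one, wzG_zero_right]
    positivity
  have h := hanti.hasSum_sub_add_one tendsto_tsum_wzF_atTop
  simp only [tsum_wzF_sub_tsum_wzF_add_one, wzG_zero_right, wzF_zero_left,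
    hasSum_one_div_add_one_sq.tsum_eq, sub_zero] at h
  exact h.tsum_eq
end

section
/- lim_{q→1⁻} (1-q) · (q²;q²)_∞² / (q;q²)_∞² = π/2, where the limit is over real q approaching 1 from below. -/
open scoped BigOperators

/-- The infinite q-Pochhammer symbol over the reals. -/
noncomputable def qPochInfR (a q : ℝ) : ℝ := ∏' k : ℕ, (1 - a * q ^ k)

/-!
For `0 < q < 1`, writing `[n] = 1 + q + ⋯ + q ^ (n - 1)`, the quantity
`(1 - q) (q²;q²)∞² / (q;q²)∞²` is the product over `k` of `[2k+2]² / ([2k+1] [2k+3])`,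
and `[n + 1]² = [n] [n + 2] + q ^ n` turns the `k`-th factor into
`1 + q ^ (2k+1) / ([2k+1] [2k+3])`. Pairing `q ^ i` with `q ^ (2m - i)` (AM–GM) gives
`[2m+1] ≥ (2m+1) q ^ m`, so the correction term is at most its value `1 / ((2k+1)(2k+3))`
at `q = 1`, for every `q ≥ 0`. The product therefore converges locally uniformly on `(0, ∞)`
to a continuous function, whose value at `q = 1` is Wallis' product `π / 2`.
-/

open Filter Finset Set Real

section QNat

variable {R : Type*}

def qNat [Semiring R] (q : R) (n : ℕ) : R := ∑ i ∈ range n, q ^ i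

@[simp]
lemma qNat_one [Semiring R] (n : ℕ) : qNat (1 : R) n = n := by simp [qNat]

lemma one_sub_mul_qNat [Ring R] (q : R) (n : ℕ) : (1 - q) * qNat q n = 1 - q ^ n :=
  mul_neg_geom_sum q n

lemma qNat_succ_sq_sub_mul [CommRing R] (q : R) (n : ℕ) :
    qNat q (n + 1) ^ 2 - qNat q n * qNat q (n + 2) = q ^ n := by
  have h₁ : qNat q (n + 1) = q ^ n + qNat q n := geom_sum_succ'
  have h₂ : qNat q (n + 2) = q * qNat q (n + 1) + 1 := geom_sum_succ
  have h₃ : qNat q (n + 1) = q * qNat q n + 1 := geom_sum_succ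
  linear_combination qNat q (n + 1) * h₃ - qNat q n * h₂ + h₁

variable [CommRing R] [LinearOrder R] [IsStrictOrderedRing R]

lemma one_le_qNat {q : R} (hq : 0 ≤ q) {n : ℕ} (hn : n ≠ 0) : 1 ≤ qNat q n := by
  obtain ⟨n, rfl⟩ := Nat.exists_eq_succ_of_ne_zero hn
  rw [qNat, geom_sum_succ]
  have : 0 ≤ q * ∑ i ∈ range n, q ^ i := by positivity
  exact le_add_of_nonneg_left this

lemma qNat_pos {q : R} (hq : 0 ≤ q) {n : ℕ} (hn : n ≠ 0) : 0 < qNat q n :=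
  one_pos.trans_le (one_le_qNat hq hn)

lemma mul_pow_le_qNat_odd {q : R} (hq : 0 ≤ q) (m : ℕ) :
    (2 * m + 1 : R) * q ^ m ≤ qNat q (2 * m + 1) := by
  have amgm : ∀ i ∈ range (2 * m + 1), 2 * q ^ m ≤ q ^ i + q ^ (2 * m - i) := by
    intro i hi
    have hi : i ≤ 2 * m := Nat.le_of_lt_succ (Finset.mem_range.mp hi)
    have hprod : q ^ i * q ^ (2 * m - i) = (q ^ m) ^ 2 := by
      rw [← pow_add, ← pow_mul, Nat.add_sub_cancel' hi, mul_comm]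
    nlinarith [sq_nonneg (q ^ i - q ^ (2 * m - i)), pow_nonneg hq i,
      pow_nonneg hq (2 * m - i), pow_nonneg hq m]
  have hsum : 2 * qNat q (2 * m + 1) = ∑ i ∈ range (2 * m + 1), (q ^ i + q ^ (2 * m - i)) := by
    rw [sum_add_distrib, two_mul, qNat, ← sum_range_reflect (fun i => q ^ (2 * m - i))]
    congr 1
    refine sum_congr rfl fun i hi => ?_
    rw [Finset.mem_range] at hi
    congr 1
    omega
  have hbound := sum_le_sum amgm
  rw [sum_const, card_range, nsmul_eq_mul, ← hsum] at hbound
  push_cast at hbound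
  nlinarith

end QNat

section QPochhammer

variable {q : ℝ}

lemma hasProd_qPochInfR (a : ℝ) (hq : |q| < 1) :
    HasProd (fun k : ℕ => 1 - a * q ^ k) (qPochInfR a q) := by
  have hs : Summable fun k : ℕ => -(a * q ^ k) :=
    ((summable_geometric_of_abs_lt_one hq).mul_left a).neg
  simpa only [qPochInfR, sub_eq_add_neg] using (Real.multipliable_one_add_of_summable hs).hasProd

lemma qPochInfR_ne_zero {a : ℝ} (hq : |q| < 1) (ha : ∀ k : ℕ, a * q ^ k ≠ 1) :
    qPochInfR a q ≠ 0 := by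
  have hs : Summable fun k : ℕ => ‖-(a * q ^ k)‖ := by
    simpa only [norm_neg] using ((summable_geometric_of_abs_lt_one hq).mul_left a).norm
  have hfactor : ∀ k : ℕ, 1 + -(a * q ^ k) ≠ 0 := fun k => by
    rw [← sub_eq_add_neg, sub_ne_zero]
    exact (ha k).symm
  simpa only [qPochInfR, sub_eq_add_neg] using tprod_one_add_ne_zero_of_summable hfactor hs

lemma qPochInfR_eq_one_sub_mul (a : ℝ) (hq : |q| < 1) :
    qPochInfR a q = (1 - a) * qPochInfR (a * q) q := by
  have hshift : (fun k : ℕ => 1 - a * q ^ (k + 1)) = fun k => 1 - a * q * q ^ k := by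
    ext k; ring
  have hmult : Multipliable fun k : ℕ => 1 - a * q ^ (k + 1) := by
    rw [hshift]
    exact (hasProd_qPochInfR (a * q) hq).multipliable
  unfold qPochInfR
  rw [tprod_eq_zero_mul' (f := fun k => 1 - a * q ^ k) hmult, hshift, pow_zero, mul_one]

end QPochhammer

lemma HasProdLocallyUniformlyOn.continuousOn {ι α β : Type*} [CommMonoid α] [UniformSpace α]
    [ContinuousMul α] [TopologicalSpace β] {f : ι → β → α} {g : β → α} {s : Set β}
    (h : HasProdLocallyUniformlyOn f g s) (hf : ∀ i, ContinuousOn (f i) s) :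
    ContinuousOn g s :=
  TendstoLocallyUniformlyOn.continuousOn h
    (Eventually.of_forall fun t => continuousOn_finsetProd t fun i _ => hf i).frequently

noncomputable def qWallisTerm (k : ℕ) (q : ℝ) : ℝ :=
  q ^ (2 * k + 1) / (qNat q (2 * k + 1) * qNat q (2 * k + 3))

lemma qNat_mul_qNat_pos {q : ℝ} (hq : 0 ≤ q) (k : ℕ) :
    0 < qNat q (2 * k + 1) * qNat q (2 * k + 3) :=
  mul_pos (qNat_pos hq (by omega)) (qNat_pos hq (by omega))

lemma qWallisTerm_nonneg {q : ℝ} (hq : 0 ≤ q) (k : ℕ) : 0 ≤ qWallisTerm k q :=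
  div_nonneg (pow_nonneg hq _) (qNat_mul_qNat_pos hq k).le

lemma qWallisTerm_one (k : ℕ) : qWallisTerm k 1 = 1 / ((2 * k + 1) * (2 * k + 3)) := by
  simp [qWallisTerm]

lemma qWallisTerm_le_qWallisTerm_one {q : ℝ} (hq : 0 ≤ q) (k : ℕ) :
    qWallisTerm k q ≤ qWallisTerm k 1 := by
  have h₁ := mul_pow_le_qNat_odd hq k
  have h₃ := mul_pow_le_qNat_odd hq (k + 1)
  rw [qWallisTerm_one, qWallisTerm, div_le_div_iff₀ (qNat_mul_qNat_pos hq k) (by positivity),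
    one_mul]
  calc q ^ (2 * k + 1) * ((2 * k + 1) * (2 * k + 3))
      = ((2 * k + 1) * q ^ k) * ((2 * (k + 1 : ℕ) + 1) * q ^ (k + 1)) := by push_cast; ring
    _ ≤ qNat q (2 * k + 1) * qNat q (2 * (k + 1) + 1) :=
        mul_le_mul h₁ h₃ (by positivity) (qNat_pos hq (by omega)).le
    _ = qNat q (2 * k + 1) * qNat q (2 * k + 3) := rfl

lemma summable_qWallisTerm_one : Summable fun k : ℕ => qWallisTerm k 1 := by
  have hsq : Summable fun k : ℕ => 1 / ((k : ℝ) + 1) ^ 2 := by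
    simpa using (summable_nat_add_iff 1).mpr (Real.summable_one_div_nat_pow.mpr one_lt_two)
  refine hsq.of_nonneg_of_le (fun k => qWallisTerm_nonneg zero_le_one k) fun k => ?_
  rw [qWallisTerm_one]
  gcongr
  nlinarith

lemma continuousOn_qWallisTerm (k : ℕ) : ContinuousOn (qWallisTerm k) (Ici 0) := by
  refine ContinuousOn.div (by fun_prop) (by unfold qNat; fun_prop) fun q hq => ?_
  exact (qNat_mul_qNat_pos hq k).ne'

lemma one_add_qWallisTerm_eq {q : ℝ} (hq₀ : 0 ≤ q) (hq₁ : q < 1) (k : ℕ) :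
    1 + qWallisTerm k q
      = (1 - q ^ (2 * k + 2)) ^ 2 / ((1 - q ^ (2 * k + 1)) * (1 - q ^ (2 * k + 3))) := by
  have hkey :
      qNat q (2 * k + 2) ^ 2 - qNat q (2 * k + 1) * qNat q (2 * k + 3) = q ^ (2 * k + 1) :=
    qNat_succ_sq_sub_mul q (2 * k + 1)
  have h₁ : qNat q (2 * k + 1) ≠ 0 := (qNat_pos hq₀ (by omega)).ne'
  have h₃ : qNat q (2 * k + 3) ≠ 0 := (qNat_pos hq₀ (by omega)).ne'
  have hq : 1 - q ≠ 0 := by linarith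
  rw [qWallisTerm, ← one_sub_mul_qNat, ← one_sub_mul_qNat, ← one_sub_mul_qNat]
  field_simp
  linear_combination -hkey

lemma one_add_qWallisTerm_one (k : ℕ) :
    1 + qWallisTerm k 1 = (2 * k + 2) / (2 * k + 1) * ((2 * k + 2) / (2 * k + 3)) := by
  rw [qWallisTerm_one]
  field_simp
  ring

lemma continuousOn_tprod_one_add_qWallisTerm :
    ContinuousOn (fun q => ∏' k, (1 + qWallisTerm k q)) (Ioi 0) := by
  have hbound : ∀ᶠ k in atTop, ∀ q ∈ Ioi (0 : ℝ), ‖qWallisTerm k q‖ ≤ qWallisTerm k 1 :=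
    Eventually.of_forall fun k q hq => by
      rw [Real.norm_of_nonneg (qWallisTerm_nonneg (le_of_lt hq) k)]
      exact qWallisTerm_le_qWallisTerm_one (le_of_lt hq) k
  have hcont (k : ℕ) : ContinuousOn (qWallisTerm k) (Ioi 0) :=
    (continuousOn_qWallisTerm k).mono Ioi_subset_Ici_self
  exact (Summable.hasProdLocallyUniformlyOn_nat_one_add isOpen_Ioi summable_qWallisTerm_one
    hbound hcont).continuousOn fun k => continuousOn_const.add (hcont k)

lemma tprod_one_add_qWallisTerm_one : ∏' k, (1 + qWallisTerm k 1) = π / 2 := by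
  have hmult : Multipliable fun k => 1 + qWallisTerm k 1 :=
    Real.multipliable_one_add_of_summable summable_qWallisTerm_one
  refine tendsto_nhds_unique hmult.hasProd.tendsto_prod_nat ?_
  simpa only [one_add_qWallisTerm_one] using Real.tendsto_prod_pi_div_two

lemma tprod_one_add_qWallisTerm_eq {q : ℝ} (hq₀ : 0 < q) (hq₁ : q < 1) :
    ∏' k, (1 + qWallisTerm k q)
      = (1 - q) * qPochInfR (q ^ 2) (q ^ 2) ^ 2 / qPochInfR q (q ^ 2) ^ 2 := by
  have hq : |q ^ 2| < 1 := by rw [abs_of_nonneg (by positivity)]; nlinarith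
  have hq₂ : q ^ 2 ≤ 1 := pow_le_one₀ hq₀.le hq₁.le
  have hne_one (a : ℝ) (ha₀ : 0 ≤ a) (ha₁ : a < 1) (k : ℕ) : a * (q ^ 2) ^ k ≠ 1 :=
    (mul_lt_one_of_nonneg_of_lt_one_left ha₀ ha₁ (pow_le_one₀ (by positivity) hq₂)).ne
  have hodd : qPochInfR q (q ^ 2) = (1 - q) * qPochInfR (q ^ 3) (q ^ 2) := by
    rw [qPochInfR_eq_one_sub_mul q hq, ← pow_succ']
  have hne₁ : qPochInfR q (q ^ 2) ≠ 0 := qPochInfR_ne_zero hq (hne_one q hq₀.le hq₁)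
  have hne₃ : qPochInfR (q ^ 3) (q ^ 2) ≠ 0 :=
    qPochInfR_ne_zero hq (hne_one _ (by positivity) (pow_lt_one₀ hq₀.le hq₁ (by norm_num)))
  have hprod := ((hasProd_qPochInfR (q ^ 2) hq).pow 2).div₀
    ((hasProd_qPochInfR q hq).mul (hasProd_qPochInfR (q ^ 3) hq)) (mul_ne_zero hne₁ hne₃)
  rw [(hprod.congr_fun fun k => ?_).tprod_eq]
  · have : 1 - q ≠ 0 := by linarith
    rw [hodd]
    field_simp
  · rw [one_add_qWallisTerm_eq hq₀.le hq₁]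
    ring

theorem limit_q_to_one :
    Filter.Tendsto
      (fun q : ℝ => (1 - q) * qPochInfR (q ^ 2) (q ^ 2) ^ 2 / qPochInfR q (q ^ 2) ^ 2)
      (nhdsWithin 1 (Set.Iio 1)) (nhds (Real.pi / 2)) := by
  have hcont : ContinuousAt (fun q => ∏' k, (1 + qWallisTerm k q)) 1 :=
    continuousOn_tprod_one_add_qWallisTerm.continuousAt (Ioi_mem_nhds one_pos)
  rw [← tprod_one_add_qWallisTerm_one]
  refine (hcont.tendsto.mono_left nhdsWithin_le_nhds).congr' ?_
  filter_upwards [Ioo_mem_nhdsLT one_pos] with q hq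
  exact tprod_one_add_qWallisTerm_eq hq.1 hq.2
end

section
/- (1/4) ∑_{n=0}^∞ (3n+2) · 2^{4n} · (n!)⁶ / ((2n+1)!)³ = π²/16. -/
open scoped BigOperators

open Filter Finset Real Topology

namespace GuilleraAux

/-- The WZ kernel. -/
noncomputable def K (n k : ℕ) : ℝ :=
  16 ^ n * (Nat.factorial n : ℝ) ^ 4 * (Nat.factorial (n + k) : ℝ) ^ 2 *
      (Nat.factorial (2 * k) : ℝ) ^ 2 /
    ((Nat.factorial (2 * n + 1) : ℝ) * (Nat.factorial (2 * n + 2 * k + 1) : ℝ) ^ 2 *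
      (Nat.factorial k : ℝ) ^ 2)

lemma fact_pos (m : ℕ) : (0 : ℝ) < (Nat.factorial m : ℝ) := by
  exact_mod_cast m.factorial_pos

lemma K_pos (n k : ℕ) : 0 < K n k := by
  unfold K
  have h1 := fact_pos n
  have h2 := fact_pos (n + k)
  have h3 := fact_pos (2 * k)
  have h4 := fact_pos (2 * n + 1)
  have h5 := fact_pos (2 * n + 2 * k + 1)
  have h6 := fact_pos k
  positivity

lemma K_succ_k (n k : ℕ) :
    K n (k + 1) * (2 * (n : ℝ) + 2 * k + 3) ^ 2 = K n k * (2 * (k : ℝ) + 1) ^ 2 := by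
  have e1 : n + (k + 1) = (n + k) + 1 := by ring
  have e2 : 2 * (k + 1) = (2 * k + 1) + 1 := by ring
  have e3 : 2 * n + 2 * (k + 1) + 1 = ((2 * n + 2 * k + 1) + 1) + 1 := by ring
  rw [K, K, e3, e1, e2]
  simp only [Nat.factorial_succ]
  have h2 := (fact_pos (n + k)).ne'
  have h3 := (fact_pos (2 * k)).ne'
  have h4 := (fact_pos (2 * n + 1)).ne'
  have h5 := (fact_pos (2 * n + 2 * k + 1)).ne'
  have h6 := (fact_pos k).ne'
  push_cast
  field_simp
  ring

lemma K_succ_n (n k : ℕ) :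
    K (n + 1) k * ((2 * (n : ℝ) + 3) * (2 * (n : ℝ) + 2 * k + 3) ^ 2) =
      K n k * (2 * ((n : ℝ) + 1) ^ 3) := by
  have e1 : (n + 1) + k = (n + k) + 1 := by ring
  have e2 : 2 * (n + 1) + 1 = ((2 * n + 1) + 1) + 1 := by ring
  have e3 : 2 * (n + 1) + 2 * k + 1 = ((2 * n + 2 * k + 1) + 1) + 1 := by ring
  rw [K, K, e3, e2, e1]
  simp only [Nat.factorial_succ]
  have h1 := (fact_pos n).ne'
  have h2 := (fact_pos (n + k)).ne'
  have h4 := (fact_pos (2 * n + 1)).ne'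
  have h5 := (fact_pos (2 * n + 2 * k + 1)).ne'
  have h6 := (fact_pos k).ne'
  push_cast
  field_simp
  ring

lemma K_succ_k' (n k : ℕ) :
    K n (k + 1) = K n k * (2 * (k : ℝ) + 1) ^ 2 / (2 * (n : ℝ) + 2 * k + 3) ^ 2 := by
  have h1 := K_succ_k n k
  have d2 : ((2 : ℝ) * n + 2 * k + 3) ^ 2 ≠ 0 := by positivity
  field_simp
  linarith [h1]

lemma K_succ_n' (n k : ℕ) :
    K (n + 1) k =
      K n k * (2 * ((n : ℝ) + 1) ^ 3) /
        ((2 * (n : ℝ) + 3) * (2 * (n : ℝ) + 2 * k + 3) ^ 2) := by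
  have h2 := K_succ_n n k
  have d1 : ((2 : ℝ) * n + 3) * (2 * (n : ℝ) + 2 * k + 3) ^ 2 ≠ 0 := by positivity
  field_simp
  linarith [h2]

/-- The WZ identity: with `F n k = (4n+2) K n k` and `G n k = (3n+2k+2) K n k`,
`F (n+1) k - F n k = G n (k+1) - G n k`. -/
lemma wz (n k : ℕ) :
    (4 * (n : ℝ) + 6) * K (n + 1) k - (4 * (n : ℝ) + 2) * K n k =
      (3 * (n : ℝ) + 2 * k + 4) * K n (k + 1) - (3 * (n : ℝ) + 2 * k + 2) * K n k := by
  rw [K_succ_n', K_succ_k']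
  have d1 : (2 * (n : ℝ) + 3) ≠ 0 := by positivity
  have d2 : (2 * (n : ℝ) + 2 * k + 3) ≠ 0 := by positivity
  field_simp
  ring

lemma K_zero_right (n : ℕ) :
    K n 0 = 16 ^ n * (Nat.factorial n : ℝ) ^ 6 / (Nat.factorial (2 * n + 1) : ℝ) ^ 3 := by
  have h4 := (fact_pos (2 * n + 1)).ne'
  have h1 := (fact_pos n).ne'
  simp only [K, Nat.add_zero, Nat.mul_zero, Nat.factorial_zero]
  field_simp

lemma K_zero_left (k : ℕ) : K 0 k = 1 / (2 * (k : ℝ) + 1) ^ 2 := by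
  have e3 : 2 * 0 + 2 * k + 1 = (2 * k) + 1 := by ring
  have h3 := (fact_pos (2 * k)).ne'
  have h6 := (fact_pos k).ne'
  rw [K, e3]
  simp only [Nat.factorial_succ, Nat.zero_add, Nat.factorial_zero, Nat.mul_zero,
    Nat.factorial_one, pow_zero]
  push_cast
  field_simp

lemma K_le (n k : ℕ) : K n k ≤ K n 0 / (2 * (k : ℝ) + 1) ^ 2 := by
  induction k with
  | zero => simp
  | succ k ih =>
      rw [K_succ_k' n k]
      have hb : K n k * (2 * (k : ℝ) + 1) ^ 2 ≤ K n 0 := by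
        have h' := mul_le_mul_of_nonneg_right ih
          (le_of_lt (show (0 : ℝ) < (2 * (k : ℝ) + 1) ^ 2 by positivity))
        calc K n k * (2 * (k : ℝ) + 1) ^ 2
            ≤ K n 0 / (2 * (k : ℝ) + 1) ^ 2 * (2 * (k : ℝ) + 1) ^ 2 := h'
          _ = K n 0 := by
              field_simp
      have h23 : (0 : ℝ) < (2 * (k : ℝ) + 3) ^ 2 := by positivity
      have hstep : (2 * (k : ℝ) + 3) ^ 2 ≤ (2 * (n : ℝ) + 2 * k + 3) ^ 2 := by
        have hn : (0 : ℝ) ≤ (n : ℝ) := Nat.cast_nonneg n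
        have h1 : (0 : ℝ) ≤ 2 * (k : ℝ) + 3 := by positivity
        nlinarith
      have key : K n k * (2 * (k : ℝ) + 1) ^ 2 / (2 * (n : ℝ) + 2 * k + 3) ^ 2
          ≤ K n 0 / (2 * (k : ℝ) + 3) ^ 2 :=
        div_le_div₀ (K_pos n 0).le hb h23 hstep
      have hcast : (2 * ((k + 1 : ℕ) : ℝ) + 1) ^ 2 = (2 * (k : ℝ) + 3) ^ 2 := by
        push_cast; ring
      rw [hcast]
      exact key

lemma summable_one_div_odd_sq : Summable (fun k : ℕ => 1 / (2 * (k : ℝ) + 1) ^ 2) := by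
  have h : Summable (fun k : ℕ => 1 / ((k : ℝ) + 1) ^ 2) := by
    have := (summable_nat_add_iff (f := fun n : ℕ => 1 / (n : ℝ) ^ 2) 1).2
      (summable_one_div_nat_pow.2 (by norm_num))
    refine this.congr fun k => by push_cast; ring
  refine Summable.of_nonneg_of_le (fun k => by positivity) (fun k => ?_) h
  have h1 : ((k : ℝ) + 1) ^ 2 ≤ (2 * (k : ℝ) + 1) ^ 2 := by
    have : (0 : ℝ) ≤ (k : ℝ) := Nat.cast_nonneg k
    nlinarith
  exact one_div_le_one_div_of_le (by positivity) h1

lemma summable_K (n : ℕ) : Summable (fun k => K n k) := by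
  refine Summable.of_nonneg_of_le (fun k => (K_pos n k).le) (fun k => ?_)
    ((summable_one_div_odd_sq).mul_left (K n 0))
  calc K n k ≤ K n 0 / (2 * (k : ℝ) + 1) ^ 2 := K_le n k
    _ = K n 0 * (1 / (2 * (k : ℝ) + 1) ^ 2) := by ring

set_option maxHeartbeats 1000000 in
/-- Sum of odd inverse squares. -/
lemma hasSum_odd_sq : HasSum (fun k : ℕ => 1 / (2 * (k : ℝ) + 1) ^ 2) (π ^ 2 / 8) := by
  have hbasel : HasSum (fun n : ℕ => 1 / (n : ℝ) ^ 2) (π ^ 2 / 6) := hasSum_zeta_two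
  have heven : HasSum (fun k : ℕ => 1 / ((2 * k : ℕ) : ℝ) ^ 2) (π ^ 2 / 6 / 4) := by
    have h4 := hbasel.div_const 4
    have hfe : (fun k : ℕ => 1 / ((2 * k : ℕ) : ℝ) ^ 2) =
        fun k : ℕ => (1 / ((k : ℕ) : ℝ) ^ 2) / 4 := by
      funext k
      push_cast
      ring
    rw [hfe]
    exact h4
  have hinj : Function.Injective (fun k : ℕ => 2 * k + 1) := fun a b h => by
    simpa using h
  have hodd : Summable (fun k : ℕ => 1 / ((2 * k + 1 : ℕ) : ℝ) ^ 2) :=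
    Summable.comp_injective (i := fun k : ℕ => 2 * k + 1) hbasel.summable hinj
  have htot := HasSum.even_add_odd (f := fun n : ℕ => 1 / (n : ℝ) ^ 2) heven hodd.hasSum
  have hval : π ^ 2 / 6 / 4 + ∑' k : ℕ, 1 / ((2 * k + 1 : ℕ) : ℝ) ^ 2 = π ^ 2 / 6 :=
    htot.unique hbasel
  have hO : (∑' k : ℕ, 1 / ((2 * k + 1 : ℕ) : ℝ) ^ 2) = π ^ 2 / 8 := by linarith
  have hres := hodd.hasSum
  rw [hO] at hres
  have hfun : (fun k : ℕ => 1 / (2 * (k : ℝ) + 1) ^ 2) =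
      fun k : ℕ => 1 / ((2 * k + 1 : ℕ) : ℝ) ^ 2 := by
    funext k; push_cast; ring
  rw [hfun]
  exact hres


noncomputable def T (n : ℕ) : ℝ := ∑' k, (4 * (n : ℝ) + 2) * K n k

lemma summable_F (n : ℕ) : Summable (fun k => (4 * (n : ℝ) + 2) * K n k) :=
  (summable_K n).mul_left _

lemma T_nonneg (n : ℕ) : 0 ≤ T n :=
  tsum_nonneg fun k => mul_nonneg (by positivity) (K_pos n k).le

lemma tendsto_G (n : ℕ) :
    Tendsto (fun k : ℕ => (3 * (n : ℝ) + 2 * k + 2) * K n k) atTop (𝓝 0) := by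
  have hub : ∀ k : ℕ, (3 * (n : ℝ) + 2 * k + 2) * K n k ≤
      (K n 0 * (3 * (n : ℝ) + 3)) * (2 * (k : ℝ) + 1)⁻¹ := by
    intro k
    have hkpos : (0 : ℝ) < 2 * (k : ℝ) + 1 := by positivity
    have hcoef : (0 : ℝ) ≤ 3 * (n : ℝ) + 2 * k + 2 := by positivity
    have h1 : (3 * (n : ℝ) + 2 * k + 2) * K n k ≤
        (3 * (n : ℝ) + 2 * k + 2) * (K n 0 / (2 * (k : ℝ) + 1) ^ 2) :=
      mul_le_mul_of_nonneg_left (K_le n k) hcoef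
    refine h1.trans ?_
    have key : (3 * (n : ℝ) + 2 * k + 2) ≤ (3 * (n : ℝ) + 3) * (2 * (k : ℝ) + 1) := by
      have hn : (0 : ℝ) ≤ (n : ℝ) := Nat.cast_nonneg n
      have hk : (0 : ℝ) ≤ (k : ℝ) := Nat.cast_nonneg k
      nlinarith
    have hK0 : (0 : ℝ) ≤ K n 0 / (2 * (k : ℝ) + 1) ^ 2 := by
      have := (K_pos n 0).le; positivity
    calc (3 * (n : ℝ) + 2 * k + 2) * (K n 0 / (2 * (k : ℝ) + 1) ^ 2)
        ≤ ((3 * (n : ℝ) + 3) * (2 * (k : ℝ) + 1)) * (K n 0 / (2 * (k : ℝ) + 1) ^ 2) :=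
          mul_le_mul_of_nonneg_right key hK0
      _ = (K n 0 * (3 * (n : ℝ) + 3)) * (2 * (k : ℝ) + 1)⁻¹ := by
          field_simp
  have hlow : ∀ k : ℕ, 0 ≤ (3 * (n : ℝ) + 2 * k + 2) * K n k :=
    fun k => mul_nonneg (by positivity) (K_pos n k).le
  have htend : Tendsto (fun k : ℕ => (K n 0 * (3 * (n : ℝ) + 3)) * (2 * (k : ℝ) + 1)⁻¹)
      atTop (𝓝 0) := by
    have h1 : Tendsto (fun k : ℕ => 2 * (k : ℝ) + 1) atTop atTop := by
      apply tendsto_atTop_add_const_right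
      exact (tendsto_natCast_atTop_atTop (R := ℝ)).const_mul_atTop (by norm_num)
    have h2 := h1.inv_tendsto_atTop
    have := h2.const_mul (K n 0 * (3 * (n : ℝ) + 3))
    simpa using this
  exact squeeze_zero hlow hub htend

lemma T_succ (n : ℕ) : T (n + 1) = T n - (3 * (n : ℝ) + 2) * K n 0 := by
  set g := fun k : ℕ => (3 * (n : ℝ) + 2 * k + 2) * K n k with hg
  have hD : Summable (fun k => g (k + 1) - g k) := by
    refine Summable.congr
      (((summable_K (n + 1)).mul_left (4 * (n : ℝ) + 6)).sub
        ((summable_K n).mul_left (4 * (n : ℝ) + 2))) ?_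
    intro k
    have hwz := wz n k
    simp only [hg]
    push_cast
    linarith
  have hTel : HasSum (fun k => g (k + 1) - g k) (0 - g 0) := by
    rw [hD.hasSum_iff_tendsto_nat]
    have hps : ∀ N : ℕ, ∑ k ∈ range N, (g (k + 1) - g k) = g N - g 0 :=
      fun N => Finset.sum_range_sub g N
    simp only [hps]
    exact (tendsto_G n).sub_const (g 0)
  have hF : HasSum (fun k => (4 * (n : ℝ) + 2) * K n k) (T n) := (summable_F n).hasSum
  have h1 : HasSum (fun k => (4 * (n : ℝ) + 6) * K (n + 1) k) (T n + (0 - g 0)) := by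
    refine (hF.add hTel).congr_fun fun k => ?_
    have hwz := wz n k
    simp only [hg]
    push_cast
    linarith
  have h2 : T (n + 1) = T n + (0 - g 0) := by
    rw [T]
    rw [← h1.tsum_eq]
    congr 1
    funext k
    push_cast
    ring
  have hg0 : g 0 = (3 * (n : ℝ) + 2) * K n 0 := by simp [hg]
  rw [h2, hg0]
  ring

lemma sum_range_eq (N : ℕ) :
    ∑ n ∈ range N, (3 * (n : ℝ) + 2) * K n 0 = T 0 - T N := by
  induction N with
  | zero => simp
  | succ N ih =>
      rw [Finset.sum_range_succ, ih, T_succ N]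
      ring

lemma K_n0_le (n : ℕ) : K n 0 ≤ (1 / 4 : ℝ) ^ n := by
  induction n with
  | zero =>
      rw [K_zero_left 0]
      norm_num
  | succ n ih =>
      rw [K_succ_n' n 0]
      have hD : (0 : ℝ) < (2 * (n : ℝ) + 3) * (2 * (n : ℝ) + 2 * (0 : ℕ) + 3) ^ 2 := by
        positivity
      have hKn := (K_pos n 0).le
      have hstep : K n 0 * (2 * ((n : ℝ) + 1) ^ 3) /
          ((2 * (n : ℝ) + 3) * (2 * (n : ℝ) + 2 * (0 : ℕ) + 3) ^ 2) ≤ K n 0 / 4 := by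
        rw [div_le_div_iff₀ hD (by norm_num)]
        have hn : (0 : ℝ) ≤ (n : ℝ) := Nat.cast_nonneg n
        have hpoly : (2 * ((n : ℝ) + 1) ^ 3) * 4 ≤
            (2 * (n : ℝ) + 3) * (2 * (n : ℝ) + 2 * ((0 : ℕ) : ℝ) + 3) ^ 2 := by
          push_cast
          nlinarith
        calc K n 0 * (2 * ((n : ℝ) + 1) ^ 3) * 4
            = K n 0 * ((2 * ((n : ℝ) + 1) ^ 3) * 4) := by ring
          _ ≤ K n 0 * ((2 * (n : ℝ) + 3) * (2 * (n : ℝ) + 2 * ((0 : ℕ) : ℝ) + 3) ^ 2) :=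
              mul_le_mul_of_nonneg_left hpoly hKn
          _ = K n 0 * ((2 * (n : ℝ) + 3) * (2 * (n : ℝ) + 2 * (0 : ℕ) + 3) ^ 2) := by
              norm_num
      calc K n 0 * (2 * ((n : ℝ) + 1) ^ 3) /
            ((2 * (n : ℝ) + 3) * (2 * (n : ℝ) + 2 * (0 : ℕ) + 3) ^ 2)
          ≤ K n 0 / 4 := hstep
        _ ≤ (1 / 4 : ℝ) ^ n / 4 := by linarith
        _ = (1 / 4 : ℝ) ^ (n + 1) := by
            rw [pow_succ]
            ring

lemma T_le (N : ℕ) : T N ≤ (4 * (N : ℝ) + 2) * (1 / 4 : ℝ) ^ N * (π ^ 2 / 8) := by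
  have hsum2 : Summable (fun k : ℕ => (4 * (N : ℝ) + 2) * (K N 0 * (1 / (2 * (k : ℝ) + 1) ^ 2))) :=
    (summable_one_div_odd_sq.mul_left (K N 0)).mul_left _
  have h1 : T N ≤ ∑' k : ℕ, (4 * (N : ℝ) + 2) * (K N 0 * (1 / (2 * (k : ℝ) + 1) ^ 2)) := by
    refine Summable.tsum_le_tsum (fun k => ?_) (summable_F N) hsum2
    have h := K_le N k
    have hc : (0 : ℝ) ≤ 4 * (N : ℝ) + 2 := by positivity
    have : K N k ≤ K N 0 * (1 / (2 * (k : ℝ) + 1) ^ 2) := by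
      rw [mul_one_div]
      exact h
    exact mul_le_mul_of_nonneg_left this hc
  have h2 : ∑' k : ℕ, (4 * (N : ℝ) + 2) * (K N 0 * (1 / (2 * (k : ℝ) + 1) ^ 2)) =
      (4 * (N : ℝ) + 2) * K N 0 * (π ^ 2 / 8) := by
    have := (hasSum_odd_sq.mul_left (K N 0)).mul_left (4 * (N : ℝ) + 2)
    rw [this.tsum_eq]
    ring
  rw [h2] at h1
  refine h1.trans ?_
  have hK := K_n0_le N
  have hπ : (0 : ℝ) < π ^ 2 / 8 := by positivity
  have hc : (0 : ℝ) ≤ 4 * (N : ℝ) + 2 := by positivity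
  have := mul_le_mul_of_nonneg_left hK hc
  nlinarith [pow_pos (show (0:ℝ) < 1/4 by norm_num) N, K_pos N 0]

lemma T_tendsto : Tendsto T atTop (𝓝 0) := by
  have hb : Tendsto (fun N : ℕ => (4 * (N : ℝ) + 2) * (1 / 4 : ℝ) ^ N * (π ^ 2 / 8))
      atTop (𝓝 0) := by
    have h1 : Tendsto (fun N : ℕ => (N : ℝ) ^ 1 * (1 / 4 : ℝ) ^ N) atTop (𝓝 0) :=
      tendsto_pow_const_mul_const_pow_of_lt_one 1 (by norm_num) (by norm_num)
    have h2 : Tendsto (fun N : ℕ => (1 / 4 : ℝ) ^ N) atTop (𝓝 0) :=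
      tendsto_pow_atTop_nhds_zero_of_lt_one (by norm_num) (by norm_num)
    have h3 := (h1.const_mul (4 * (π ^ 2 / 8))).add (h2.const_mul (2 * (π ^ 2 / 8)))
    have : (fun N : ℕ => (4 * (N : ℝ) + 2) * (1 / 4 : ℝ) ^ N * (π ^ 2 / 8)) =
        fun N : ℕ => 4 * (π ^ 2 / 8) * ((N : ℝ) ^ 1 * (1 / 4 : ℝ) ^ N) +
          2 * (π ^ 2 / 8) * (1 / 4 : ℝ) ^ N := by
      funext N
      ring
    rw [this]
    simpa using h3
  exact squeeze_zero T_nonneg T_le hb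

lemma T_zero : T 0 = π ^ 2 / 4 := by
  have h : HasSum (fun k : ℕ => (2 : ℝ) * (1 / (2 * (k : ℝ) + 1) ^ 2)) (2 * (π ^ 2 / 8)) :=
    hasSum_odd_sq.mul_left 2
  rw [T]
  have hfe : (fun k : ℕ => (4 * ((0 : ℕ) : ℝ) + 2) * K 0 k) =
      fun k : ℕ => (2 : ℝ) * (1 / (2 * (k : ℝ) + 1) ^ 2) := by
    funext k
    rw [K_zero_left]
    norm_num
  rw [hfe, h.tsum_eq]
  ring

lemma main_hasSum : HasSum (fun n : ℕ => (3 * (n : ℝ) + 2) * K n 0) (π ^ 2 / 4) := by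
  rw [hasSum_iff_tendsto_nat_of_nonneg
    (fun n => mul_nonneg (by positivity) (K_pos n 0).le)]
  simp only [sum_range_eq, T_zero]
  have h : Tendsto (fun N : ℕ => T 0 - T N) atTop (𝓝 (T 0 - 0)) :=
    tendsto_const_nhds.sub T_tendsto
  rw [T_zero] at h
  simpa using h

end GuilleraAux

theorem guillera_equivalent :
    (1 / 4) * ∑' n : ℕ, (3 * (n : ℝ) + 2) * 2 ^ (4 * n) * (Nat.factorial n : ℝ) ^ 6 /
        (Nat.factorial (2 * n + 1) : ℝ) ^ 3 =
      Real.pi ^ 2 / 16 := by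
  have h := GuilleraAux.main_hasSum
  have hfe : (fun n : ℕ => (3 * (n : ℝ) + 2) * GuilleraAux.K n 0) =
      fun n : ℕ => (3 * (n : ℝ) + 2) * 2 ^ (4 * n) * (Nat.factorial n : ℝ) ^ 6 /
        (Nat.factorial (2 * n + 1) : ℝ) ^ 3 := by
    funext n
    rw [GuilleraAux.K_zero_right]
    rw [pow_mul]
    norm_num
    ring
  rw [hfe] at h
  rw [h.tsum_eq]
  ring
end
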